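/- arXiv:math/0305427 — 3 statements merged into one kernel-verified Lean document; each statement's English description precedes it below -/
import Mathlib

section
/- Let H be a real Hilbert space and f : H → ℝ ∪ {+∞} a lower semicontinuous function which is not identically +∞. Then the set { p ∈ dom(f) : D⁻f(p) ≠ ∅ } is dense in dom(f) := { x ∈ H : f(x) < +∞ }. -/
open Filter Topology

open scoped RealInnerProductSpace

/-- The viscosity subdifferential of `f : H → ℝ ∪ {+∞}` at `p`. -/
def esubdiff {H : Type*} [NormedAddCommGroup H] [InnerProductSpace ℝ H]
    (f : H → EReal) (p : H) : Set (H →L[ℝ] ℝ) :=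
  {ζ | ∃ φ : H → ℝ, ContDiff ℝ 1 φ ∧ fderiv ℝ φ p = ζ ∧
    ∀ᶠ x in 𝓝 p, f p - ((φ p : ℝ) : EReal) ≤ f x - ((φ x : ℝ) : EReal)}

section BP

variable {H : Type*} [NormedAddCommGroup H]

/-- Geometric weights for the Borwein–Preiss construction. -/
noncomputable def bpSig (r : ℝ) (i : ℕ) : ℝ := 4 / r ^ 2 * (4 : ℝ)⁻¹ ^ i

/-- Partially perturbed function in the Borwein–Preiss construction. -/
noncomputable def bpG (g : H → ℝ) (r : ℝ) (x : ℕ → H) (n : ℕ) (u : H) : ℝ :=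
  g u + ∑ i ∈ Finset.range (n + 1), bpSig r i * ‖u - x i‖ ^ 2

open Classical in
/-- Pick an approximate minimizer of a function on a closed ball. -/
noncomputable def bpPick (x₀ : H) (r : ℝ) (G : H → ℝ) (n : ℕ) : H :=
  if h : ∃ y ∈ Metric.closedBall x₀ r,
      G y < sInf (G '' Metric.closedBall x₀ r) + (8 : ℝ)⁻¹ ^ n
  then h.choose else x₀

lemma bpPick_spec (x₀ : H) (r : ℝ) (G : H → ℝ) (n : ℕ)
    (h : ∃ y ∈ Metric.closedBall x₀ r,
      G y < sInf (G '' Metric.closedBall x₀ r) + (8 : ℝ)⁻¹ ^ n) :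
    bpPick x₀ r G n ∈ Metric.closedBall x₀ r ∧
      G (bpPick x₀ r G n) < sInf (G '' Metric.closedBall x₀ r) + (8 : ℝ)⁻¹ ^ n := by
  unfold bpPick
  rw [dif_pos h]
  exact ⟨h.choose_spec.1, h.choose_spec.2⟩

/-- The Borwein–Preiss sequence of approximate minimizers. -/
noncomputable def bpSeq (g : H → ℝ) (x₀ : H) (r : ℝ) : ℕ → H
  | 0 => x₀
  | n + 1 => bpPick x₀ r (bpG g r (fun i => if _h : i < n + 1 then bpSeq g x₀ r i else x₀) n) n

lemma bpSig_pos {r : ℝ} (hr : 0 < r) (i : ℕ) : 0 < bpSig r i := by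
  unfold bpSig; positivity

lemma bpG_congr (g : H → ℝ) (r : ℝ) {x x' : ℕ → H} (n : ℕ)
    (h : ∀ i ≤ n, x i = x' i) : bpG g r x n = bpG g r x' n := by
  funext u
  unfold bpG
  congr 1
  refine Finset.sum_congr rfl fun i hi => ?_
  rw [h i (Nat.lt_succ_iff.mp (Finset.mem_range.mp hi))]

lemma bpSeq_zero (g : H → ℝ) (x₀ : H) (r : ℝ) : bpSeq g x₀ r 0 = x₀ := by
  rw [bpSeq]

lemma bpSeq_succ (g : H → ℝ) (x₀ : H) (r : ℝ) (n : ℕ) :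
    bpSeq g x₀ r (n + 1) = bpPick x₀ r (bpG g r (bpSeq g x₀ r) n) n := by
  rw [bpSeq]
  have h : bpG g r (fun i => if _h : i < n + 1 then bpSeq g x₀ r i else x₀) n
      = bpG g r (bpSeq g x₀ r) n := by
    refine bpG_congr g r n fun i hi => ?_
    simp [Nat.lt_succ_iff.mpr hi]
  rw [h]

set_option maxHeartbeats 1000000 in
/-- The core Borwein–Preiss style variational lemma with quadratic perturbations. -/
theorem bp_main {H : Type*} [NormedAddCommGroup H] [InnerProductSpace ℝ H]
    [CompleteSpace H] (g : H → ℝ) (hg : LowerSemicontinuous g) (x₀ : H) (r : ℝ)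
    (hr : 0 < r) (hbd : ∀ u ∈ Metric.closedBall x₀ r, g x₀ - 1 ≤ g u) :
    ∃ p : H, dist p x₀ < r ∧ g p ≤ g x₀ + 3 / 2 ∧ ∃ φ : H → ℝ, ContDiff ℝ 1 φ ∧
      ∀ u ∈ Metric.closedBall x₀ r, g p - φ p ≤ g u - φ u := by
  have hS0 : x₀ ∈ Metric.closedBall x₀ r := Metric.mem_closedBall_self hr.le
  -- basic facts about weights
  have hσpos : ∀ i, 0 < bpSig r i := bpSig_pos hr
  have hσsum : Summable (bpSig r) := by
    unfold bpSig
    exact (summable_geometric_of_lt_one (by norm_num) (by norm_num)).mul_left _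
  -- lower bound for all perturbed functions on the ball
  have hlow : ∀ (x : ℕ → H) (n : ℕ), ∀ u ∈ Metric.closedBall x₀ r,
      g x₀ - 1 ≤ bpG g r x n u := by
    intro x n u hu
    have h1 : (0:ℝ) ≤ ∑ i ∈ Finset.range (n + 1), bpSig r i * ‖u - x i‖ ^ 2 := by
      refine Finset.sum_nonneg fun i _ => ?_
      exact mul_nonneg (hσpos i).le (by positivity)
    have := hbd u hu
    unfold bpG
    linarith
  have hbdd : ∀ (x : ℕ → H) (n : ℕ), BddBelow (bpG g r x n '' Metric.closedBall x₀ r) := by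
    intro x n
    exact ⟨g x₀ - 1, by rintro b ⟨u, hu, rfl⟩; exact hlow x n u hu⟩
  have hne : ∀ (x : ℕ → H) (n : ℕ), (bpG g r x n '' Metric.closedBall x₀ r).Nonempty :=
    fun x n => ⟨_, ⟨x₀, hS0, rfl⟩⟩
  have hEx : ∀ (x : ℕ → H) (n : ℕ), ∃ y ∈ Metric.closedBall x₀ r,
      bpG g r x n y < sInf (bpG g r x n '' Metric.closedBall x₀ r) + (8 : ℝ)⁻¹ ^ n := by
    intro x n
    have hpow : (0:ℝ) < (8 : ℝ)⁻¹ ^ n := by positivity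
    have hlt : sInf (bpG g r x n '' Metric.closedBall x₀ r)
        < sInf (bpG g r x n '' Metric.closedBall x₀ r) + (8 : ℝ)⁻¹ ^ n := by linarith
    obtain ⟨b, ⟨y, hy, rfl⟩, hb⟩ := exists_lt_of_csInf_lt (hne x n) hlt
    exact ⟨y, hy, hb⟩
  set X := bpSeq g x₀ r with hXdef
  have hX0 : X 0 = x₀ := bpSeq_zero g x₀ r
  set m : ℕ → ℝ := fun n => sInf (bpG g r X n '' Metric.closedBall x₀ r) with hm
  have hpick : ∀ n : ℕ, X (n + 1) ∈ Metric.closedBall x₀ r ∧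
      bpG g r X n (X (n + 1)) < m n + (8 : ℝ)⁻¹ ^ n := by
    intro n
    have hXe : X (n + 1) = bpPick x₀ r (bpG g r X n) n := by
      rw [hXdef, bpSeq_succ]
    rw [hXe]
    exact bpPick_spec x₀ r (bpG g r X n) n (hEx X n)
  have hXmem : ∀ n, X n ∈ Metric.closedBall x₀ r := by
    intro n
    cases n with
    | zero => rw [hX0]; exact hS0
    | succ k => exact (hpick k).1
  -- distances of points in the ball
  have hdistS : ∀ u v : H, u ∈ Metric.closedBall x₀ r → v ∈ Metric.closedBall x₀ r →
      ‖u - v‖ ≤ 2 * r := by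
    intro u v hu hv
    have h1 : dist u x₀ ≤ r := Metric.mem_closedBall.mp hu
    have h2 : dist v x₀ ≤ r := Metric.mem_closedBall.mp hv
    calc ‖u - v‖ = dist u v := (dist_eq_norm u v).symm
    _ ≤ dist u x₀ + dist x₀ v := dist_triangle _ _ _
    _ ≤ r + r := by rw [dist_comm x₀ v]; exact add_le_add h1 h2
    _ = 2 * r := by ring
  -- monotonicity properties
  have hGmono : ∀ i j : ℕ, i ≤ j → ∀ u, bpG g r X i u ≤ bpG g r X j u := by
    intro i j hij u
    unfold bpG
    have := Finset.sum_le_sum_of_subset_of_nonneg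
      (f := fun k => bpSig r k * ‖u - X k‖ ^ 2)
      (Finset.range_subset_range.mpr (by omega : i + 1 ≤ j + 1))
      (fun k _ _ => mul_nonneg (hσpos k).le (by positivity))
    linarith
  have hmle : ∀ n : ℕ, ∀ u ∈ Metric.closedBall x₀ r, m n ≤ bpG g r X n u :=
    fun n u hu => csInf_le (hbdd X n) ⟨u, hu, rfl⟩
  have hmmono : ∀ i j : ℕ, i ≤ j → m i ≤ m j := by
    intro i j hij
    refine le_csInf (hne X j) ?_
    rintro b ⟨u, hu, rfl⟩
    exact (hmle i u hu).trans (hGmono i j hij u)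
  have hstep : ∀ n : ℕ, m (n + 1) ≤ m n + (8 : ℝ)⁻¹ ^ n := by
    intro n
    have h1 : m (n + 1) ≤ bpG g r X (n + 1) (X (n + 1)) :=
      csInf_le (hbdd X (n+1)) ⟨X (n+1), (hpick n).1, rfl⟩
    have h2 : bpG g r X (n + 1) (X (n + 1)) = bpG g r X n (X (n + 1)) := by
      unfold bpG
      rw [Finset.sum_range_succ]
      simp
    rw [h2] at h1
    exact h1.trans (hpick n).2.le
  -- accumulated increments of m
  have hmdiff : ∀ i j : ℕ, i ≤ j → m j ≤ m i + 2 * (8 : ℝ)⁻¹ ^ i := by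
    intro i j hij
    have key : ∀ j : ℕ, i ≤ j → m j ≤ m i + ∑ k ∈ Finset.Ico i j, (8 : ℝ)⁻¹ ^ k := by
      intro j
      induction j with
      | zero =>
        intro hij
        have : i = 0 := Nat.le_zero.mp hij
        subst this; simp
      | succ n ih =>
        intro hij
        rcases Nat.lt_or_ge i (n+1) with h | h
        · have hi_n : i ≤ n := Nat.lt_succ_iff.mp h
          have h1 := ih hi_n
          have hsum : ∑ k ∈ Finset.Ico i (n+1), (8 : ℝ)⁻¹ ^ k
              = (∑ k ∈ Finset.Ico i n, (8 : ℝ)⁻¹ ^ k) + (8 : ℝ)⁻¹ ^ n := by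
            rw [Finset.sum_Ico_succ_top hi_n]
          have h2 := hstep n
          linarith
        · have : i = n + 1 := le_antisymm hij h
          subst this; simp
    have hsum_le : ∑ k ∈ Finset.Ico i j, (8 : ℝ)⁻¹ ^ k ≤ 2 * (8 : ℝ)⁻¹ ^ i := by
      have h1 : ∑ k ∈ Finset.Ico i j, (8 : ℝ)⁻¹ ^ k
          ≤ ∑' k : ℕ, (8 : ℝ)⁻¹ ^ (i + k) := by
        rw [Finset.sum_Ico_eq_sum_range]
        refine Summable.sum_le_tsum _ (fun k _ => by positivity) ?_
        have hs : Summable (fun k : ℕ => (8 : ℝ)⁻¹ ^ i * (8 : ℝ)⁻¹ ^ k) :=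
          (summable_geometric_of_lt_one (by norm_num) (by norm_num)).mul_left _
        refine hs.congr fun k => ?_
        rw [← pow_add]
      have h2 : ∑' k : ℕ, (8 : ℝ)⁻¹ ^ (i + k) = (8 : ℝ)⁻¹ ^ i * (1 - (8:ℝ)⁻¹)⁻¹ := by
        have he : ∀ k : ℕ, (8 : ℝ)⁻¹ ^ (i + k) = (8 : ℝ)⁻¹ ^ i * (8 : ℝ)⁻¹ ^ k := by
          intro k; rw [← pow_add]
        rw [tsum_congr he, tsum_mul_left,
          tsum_geometric_of_lt_one (by norm_num) (by norm_num)]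
      have hp : (0:ℝ) < (8 : ℝ)⁻¹ ^ i := by positivity
      have h3 : (8 : ℝ)⁻¹ ^ i * (1 - (8:ℝ)⁻¹)⁻¹ ≤ 2 * (8 : ℝ)⁻¹ ^ i := by nlinarith
      linarith
    have := key j hij
    linarith
  -- key quadratic estimate between chosen points
  have hdist2 : ∀ i j : ℕ, i ≤ j →
      ‖X (j + 1) - X (i + 1)‖ ^ 2 ≤ 3 * r ^ 2 * (2 : ℝ)⁻¹ ^ i := by
    intro i j hij
    rcases Nat.eq_or_lt_of_le hij with rfl | hlt
    · have hnn : (0:ℝ) ≤ 3 * r ^ 2 * (2 : ℝ)⁻¹ ^ i := by positivity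
      simpa [sub_self] using hnn
    · have hsplit : bpG g r X i (X (j+1))
          + bpSig r (i+1) * ‖X (j+1) - X (i+1)‖ ^ 2 ≤ bpG g r X j (X (j+1)) := by
        unfold bpG
        rw [Finset.range_eq_Ico, Finset.range_eq_Ico]
        have hIco : (∑ k ∈ Finset.Ico 0 (i+1), bpSig r k * ‖X (j+1) - X k‖ ^ 2)
            + ∑ k ∈ Finset.Ico (i+1) (j+1), bpSig r k * ‖X (j+1) - X k‖ ^ 2
            = ∑ k ∈ Finset.Ico 0 (j+1), bpSig r k * ‖X (j+1) - X k‖ ^ 2 :=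
          Finset.sum_Ico_consecutive _ (by omega) (by omega)
        have hsingle : bpSig r (i+1) * ‖X (j+1) - X (i+1)‖ ^ 2
            ≤ ∑ k ∈ Finset.Ico (i+1) (j+1), bpSig r k * ‖X (j+1) - X k‖ ^ 2 :=
          Finset.single_le_sum
            (f := fun k => bpSig r k * ‖X (j+1) - X k‖ ^ 2)
            (fun k _ => mul_nonneg (hσpos k).le (by positivity))
            (by rw [Finset.mem_Ico]; omega)
        linarith
      have h1 : bpG g r X j (X (j+1)) < m j + (8 : ℝ)⁻¹ ^ j := (hpick j).2
      have h2 : m i ≤ bpG g r X i (X (j+1)) := hmle i _ (hXmem (j+1))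
      have h3 : m j ≤ m i + 2 * (8 : ℝ)⁻¹ ^ i := hmdiff i j hij
      have h4 : (8 : ℝ)⁻¹ ^ j ≤ (8 : ℝ)⁻¹ ^ i :=
        pow_le_pow_of_le_one (by norm_num) (by norm_num) hij
      have h5 : bpSig r (i+1) * ‖X (j + 1) - X (i + 1)‖ ^ 2 ≤ 3 * (8 : ℝ)⁻¹ ^ i := by
        linarith
      have hσ : bpSig r (i+1) = r⁻¹ ^ 2 * (4 : ℝ)⁻¹ ^ i := by
        unfold bpSig
        rw [pow_succ]
        field_simp
        ring
      rw [hσ] at h5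
      have hrpos : (0:ℝ) < r ^ 2 := by positivity
      have h4pos : (0:ℝ) < (4:ℝ) ^ i := by positivity
      have h6 := mul_le_mul_of_nonneg_right h5 (mul_pos hrpos h4pos).le
      have e1 : (r⁻¹ ^ 2) * (r ^ 2) = 1 := by
        rw [← mul_pow, inv_mul_cancel₀ hr.ne']; norm_num
      have e2 : ((4:ℝ)⁻¹ ^ i) * (4:ℝ) ^ i = 1 := by
        rw [← mul_pow]; norm_num
      have e3 : ((8:ℝ)⁻¹ ^ i) * (4:ℝ) ^ i = (2:ℝ)⁻¹ ^ i := by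
        rw [← mul_pow]; norm_num
      have lhs_eq : (r⁻¹ ^ 2 * (4:ℝ)⁻¹ ^ i * ‖X (j + 1) - X (i + 1)‖ ^ 2) * (r ^ 2 * (4:ℝ) ^ i)
          = ‖X (j + 1) - X (i + 1)‖ ^ 2 * ((r⁻¹ ^ 2 * r ^ 2) * ((4:ℝ)⁻¹ ^ i * (4:ℝ) ^ i)) := by
        ring
      have rhs_eq : 3 * (8:ℝ)⁻¹ ^ i * (r ^ 2 * (4:ℝ) ^ i)
          = 3 * r ^ 2 * ((8:ℝ)⁻¹ ^ i * (4:ℝ) ^ i) := by ring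
      rw [lhs_eq, rhs_eq, e1, e2, e3, mul_one, mul_one] at h6
      exact h6
  -- Cauchy sequence
  have hcauchy : CauchySeq X := by
    refine cauchySeq_of_le_geometric (Real.sqrt 2⁻¹) (4 * r) ?_ ?_
    · rw [show (1:ℝ) = Real.sqrt 1 by simp]
      exact Real.sqrt_lt_sqrt (by norm_num) (by norm_num)
    · intro n
      have hq : Real.sqrt 2⁻¹ ^ 2 = 2⁻¹ := Real.sq_sqrt (by norm_num)
      have hqnn : (0:ℝ) ≤ Real.sqrt 2⁻¹ := Real.sqrt_nonneg _
      have hC : (0:ℝ) ≤ 4 * r * Real.sqrt 2⁻¹ ^ n := by positivity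
      rw [dist_eq_norm]
      rw [← pow_le_pow_iff_left₀ (norm_nonneg _) hC (by norm_num : (2:ℕ) ≠ 0)]
      have hrhs : (4 * r * Real.sqrt 2⁻¹ ^ n) ^ 2 = 16 * r ^ 2 * (2 : ℝ)⁻¹ ^ n := by
        rw [mul_pow, mul_pow, ← pow_mul, mul_comm n 2, pow_mul, hq]
        ring
      rw [hrhs]
      cases n with
      | zero =>
        have h01 := hdistS (X 0) (X 1) (hXmem 0) (hXmem 1)
        simp only [pow_zero, mul_one]
        nlinarith [norm_nonneg (X 0 - X 1), hr]
      | succ k =>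
        have h := hdist2 k (k + 1) (by omega)
        have h2k : (0:ℝ) < (2 : ℝ)⁻¹ ^ k := by positivity
        have hpow : (2 : ℝ)⁻¹ ^ (k+1) = 2⁻¹ * (2 : ℝ)⁻¹ ^ k := by rw [pow_succ]; ring
        calc ‖X (k+1) - X (k+1+1)‖ ^ 2 = ‖X (k+1+1) - X (k+1)‖ ^ 2 := by
              rw [norm_sub_rev]
        _ ≤ 3 * r ^ 2 * (2 : ℝ)⁻¹ ^ k := h
        _ ≤ 16 * r ^ 2 * (2 : ℝ)⁻¹ ^ (k+1) := by
            rw [hpow]; nlinarith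
  obtain ⟨p, hp⟩ := cauchySeq_tendsto_of_complete hcauchy
  have hpS : p ∈ Metric.closedBall x₀ r := by
    have hcl : IsClosed (Metric.closedBall x₀ r) := Metric.isClosed_closedBall
    exact hcl.mem_of_tendsto hp (Filter.Eventually.of_forall hXmem)
  -- the total quadratic perturbation
  have hXnorm : ∀ n, ‖X n‖ ≤ ‖x₀‖ + r := by
    intro n
    have h1 : dist (X n) x₀ ≤ r := Metric.mem_closedBall.mp (hXmem n)
    rw [dist_eq_norm] at h1
    calc ‖X n‖ = ‖x₀ + (X n - x₀)‖ := by rw [show x₀ + (X n - x₀) = X n from by abel]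
    _ ≤ ‖x₀‖ + ‖X n - x₀‖ := norm_add_le _ _
    _ ≤ ‖x₀‖ + r := by linarith
  have hQsum : ∀ u : H, Summable (fun i => bpSig r i * ‖u - X i‖ ^ 2) := by
    intro u
    refine Summable.of_nonneg_of_le
      (fun i => mul_nonneg (hσpos i).le (by positivity)) (fun i => ?_)
      (hσsum.mul_right ((‖u‖ + (‖x₀‖ + r)) ^ 2))
    have h1 : ‖u - X i‖ ≤ ‖u‖ + (‖x₀‖ + r) :=
      (norm_sub_le _ _).trans (by linarith [hXnorm i])
    have h2 : ‖u - X i‖ ^ 2 ≤ (‖u‖ + (‖x₀‖ + r)) ^ 2 := by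
      nlinarith [norm_nonneg (u - X i)]
    exact mul_le_mul_of_nonneg_left h2 (hσpos i).le
  set Q : H → ℝ := fun u => ∑' i, bpSig r i * ‖u - X i‖ ^ 2 with hQdef
  have hQu : ∀ u, Q u = ∑' i, bpSig r i * ‖u - X i‖ ^ 2 := fun _ => rfl
  have hQnonneg : ∀ u, 0 ≤ Q u :=
    fun u => tsum_nonneg (fun i => mul_nonneg (hσpos i).le (by positivity))
  -- Q is a quadratic polynomial, hence C¹
  have hvsum : Summable (fun i => bpSig r i • X i) := by
    refine Summable.of_norm ?_
    refine Summable.of_nonneg_of_le (fun i => norm_nonneg _) (fun i => ?_)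
      (hσsum.mul_right (‖x₀‖ + r))
    rw [norm_smul, Real.norm_eq_abs, abs_of_pos (hσpos i)]
    exact mul_le_mul_of_nonneg_left (hXnorm i) (hσpos i).le
  have hBsum : Summable (fun i => bpSig r i * ‖X i‖ ^ 2) := by
    refine Summable.of_nonneg_of_le
      (fun i => mul_nonneg (hσpos i).le (by positivity)) (fun i => ?_)
      (hσsum.mul_right ((‖x₀‖ + r) ^ 2))
    have h2 : ‖X i‖ ^ 2 ≤ (‖x₀‖ + r) ^ 2 := by
      nlinarith [hXnorm i, norm_nonneg (X i), hr]
    exact mul_le_mul_of_nonneg_left h2 (hσpos i).le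
  have hinner_sum : ∀ u : H, Summable (fun i => ⟪u, bpSig r i • X i⟫) := by
    intro u
    have hmap := Summable.map hvsum (innerSL ℝ u) (innerSL ℝ u).continuous
    exact hmap.congr fun i => rfl
  have hQeq : ∀ u : H, Q u = (∑' i, bpSig r i) * ‖u‖ ^ 2
      - 2 * ⟪u, ∑' i, bpSig r i • X i⟫ + ∑' i, bpSig r i * ‖X i‖ ^ 2 := by
    intro u
    have hterm : ∀ i : ℕ, bpSig r i * ‖u - X i‖ ^ 2
        = (bpSig r i * ‖u‖ ^ 2 - 2 * ⟪u, bpSig r i • X i⟫) + bpSig r i * ‖X i‖ ^ 2 := by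
      intro i
      rw [norm_sub_sq_real, real_inner_smul_right]
      ring
    have hs1 : Summable (fun i => bpSig r i * ‖u‖ ^ 2) := hσsum.mul_right _
    have hs2 : Summable (fun i => 2 * ⟪u, bpSig r i • X i⟫) := (hinner_sum u).mul_left 2
    have hs12 : Summable (fun i => bpSig r i * ‖u‖ ^ 2 - 2 * ⟪u, bpSig r i • X i⟫) :=
      hs1.sub hs2
    rw [hQu]
    calc (∑' i, bpSig r i * ‖u - X i‖ ^ 2)
        = ∑' i, ((bpSig r i * ‖u‖ ^ 2 - 2 * ⟪u, bpSig r i • X i⟫)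
          + bpSig r i * ‖X i‖ ^ 2) := tsum_congr hterm
    _ = (∑' i, (bpSig r i * ‖u‖ ^ 2 - 2 * ⟪u, bpSig r i • X i⟫))
          + ∑' i, bpSig r i * ‖X i‖ ^ 2 := Summable.tsum_add hs12 hBsum
    _ = ((∑' i, bpSig r i * ‖u‖ ^ 2) - ∑' i, 2 * ⟪u, bpSig r i • X i⟫)
          + ∑' i, bpSig r i * ‖X i‖ ^ 2 := by rw [Summable.tsum_sub hs1 hs2]
    _ = ((∑' i, bpSig r i) * ‖u‖ ^ 2 - 2 * ∑' i, ⟪u, bpSig r i • X i⟫)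
          + ∑' i, bpSig r i * ‖X i‖ ^ 2 := by rw [tsum_mul_right, tsum_mul_left]
    _ = (∑' i, bpSig r i) * ‖u‖ ^ 2 - 2 * ⟪u, ∑' i, bpSig r i • X i⟫
          + ∑' i, bpSig r i * ‖X i‖ ^ 2 := by
        have hmap : (⟪u, ∑' i, bpSig r i • X i⟫ : ℝ) = ∑' i, ⟪u, bpSig r i • X i⟫ := by
          have h0 := ContinuousLinearMap.map_tsum (innerSL ℝ u) hvsum
          simp only [innerSL_apply_apply] at h0
          exact h0
        rw [hmap]
  have hQC : ContDiff ℝ 1 Q := by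
    have hfun : Q = fun u => (∑' i, bpSig r i) * ‖u‖ ^ 2
        - 2 * ⟪u, ∑' i, bpSig r i • X i⟫ + ∑' i, bpSig r i * ‖X i‖ ^ 2 :=
      funext hQeq
    rw [hfun]
    exact ((contDiff_const.mul (contDiff_norm_sq ℝ)).sub
      (contDiff_const.mul (ContDiff.inner ℝ contDiff_id contDiff_const))).add contDiff_const
  -- partial sums bound the total
  have hGn_le : ∀ (n : ℕ) (u : H), bpG g r X n u ≤ g u + Q u := by
    intro n u
    have h := Summable.sum_le_tsum (Finset.range (n+1))
      (fun i _ => mul_nonneg (hσpos i).le (by positivity))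
      (hQsum u)
    rw [hQu]
    unfold bpG
    linarith
  -- tail bound on the ball
  have htail : ∀ (n : ℕ) (u : H), u ∈ Metric.closedBall x₀ r →
      g u + Q u ≤ bpG g r X n u + 32 * (4 : ℝ)⁻¹ ^ n := by
    intro n u hu
    have hsplit := Summable.sum_add_tsum_nat_add (f := fun i => bpSig r i * ‖u - X i‖ ^ 2)
      (n + 1) (hQsum u)
    have hshift : Summable (fun i : ℕ => bpSig r (i + (n+1))) :=
      (summable_nat_add_iff (n+1)).mpr hσsum
    have hshift_sum : Summable (fun i : ℕ => bpSig r (i + (n+1)) * (2*r) ^ 2) :=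
      hshift.mul_right _
    have hbound : ∀ i : ℕ, bpSig r (i + (n+1)) * ‖u - X (i + (n+1))‖ ^ 2
        ≤ bpSig r (i + (n+1)) * (2*r) ^ 2 := by
      intro i
      have h1 : ‖u - X (i + (n+1))‖ ≤ 2 * r := hdistS _ _ hu (hXmem _)
      have h2 : ‖u - X (i + (n+1))‖ ^ 2 ≤ (2*r) ^ 2 := by
        nlinarith [norm_nonneg (u - X (i + (n+1)))]
      exact mul_le_mul_of_nonneg_left h2 (hσpos _).le
    have htsum_le : (∑' i : ℕ, bpSig r (i + (n+1)) * ‖u - X (i + (n+1))‖ ^ 2)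
        ≤ ∑' i : ℕ, bpSig r (i + (n+1)) * (2*r) ^ 2 := by
      refine Summable.tsum_le_tsum hbound ?_ hshift_sum
      exact Summable.of_nonneg_of_le
        (fun i => mul_nonneg (hσpos _).le (by positivity)) hbound hshift_sum
    have htsum_val : (∑' i : ℕ, bpSig r (i + (n+1)) * (2*r) ^ 2)
        ≤ 32 * (4 : ℝ)⁻¹ ^ n := by
      have heq : ∀ i : ℕ, bpSig r (i + (n+1)) * (2*r) ^ 2
          = (16 * (4:ℝ)⁻¹ ^ (n+1)) * (4:ℝ)⁻¹ ^ i := by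
        intro i
        unfold bpSig
        rw [pow_add]
        field_simp
        ring
      rw [tsum_congr heq, tsum_mul_left,
        tsum_geometric_of_lt_one (by norm_num) (by norm_num)]
      have h4 : (0:ℝ) < (4:ℝ)⁻¹ ^ n := by positivity
      have hps : (4:ℝ)⁻¹ ^ (n+1) = 4⁻¹ * (4:ℝ)⁻¹ ^ n := by rw [pow_succ]; ring
      rw [hps]
      nlinarith
    have hQsplit : Q u = (∑ i ∈ Finset.range (n+1), bpSig r i * ‖u - X i‖ ^ 2)
        + ∑' i : ℕ, bpSig r (i + (n+1)) * ‖u - X (i + (n+1))‖ ^ 2 := by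
      rw [hQu]; exact hsplit.symm
    unfold bpG
    linarith
  -- G attains its minimum over the ball at p
  have hGlsc : LowerSemicontinuous (fun u => g u + Q u) :=
    hg.add (hQC.continuous.lowerSemicontinuous)
  have hmin : ∀ u ∈ Metric.closedBall x₀ r, g p + Q p ≤ g u + Q u := by
    intro u hu
    by_contra hcon
    push_neg at hcon
    have htu : g u + Q u < ((g u + Q u) + (g p + Q p)) / 2 := by linarith
    have htp : ((g u + Q u) + (g p + Q p)) / 2 < g p + Q p := by linarith
    have hev1 : ∀ᶠ z in 𝓝 p, ((g u + Q u) + (g p + Q p)) / 2 < g z + Q z := hGlsc p _ htp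
    have hev2 : ∀ᶠ n : ℕ in atTop,
        ((g u + Q u) + (g p + Q p)) / 2 < g (X (n + 1)) + Q (X (n + 1)) := by
      have ht : Tendsto (fun n : ℕ => X (n + 1)) atTop (𝓝 p) :=
        hp.comp (tendsto_add_atTop_nat 1)
      exact ht.eventually hev1
    have hev3 : ∀ᶠ n : ℕ in atTop,
        33 * (4 : ℝ)⁻¹ ^ n < ((g u + Q u) + (g p + Q p)) / 2 - (g u + Q u) := by
      have h0 : Tendsto (fun n : ℕ => 33 * (4 : ℝ)⁻¹ ^ n) atTop (𝓝 (33 * 0)) :=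
        (tendsto_pow_atTop_nhds_zero_of_lt_one (by norm_num) (by norm_num)).const_mul 33
      rw [mul_zero] at h0
      exact h0.eventually_lt_const (by linarith)
    obtain ⟨n, h1, h2⟩ := (hev2.and hev3).exists
    have h3 : g (X (n+1)) + Q (X (n+1)) ≤ bpG g r X n (X (n+1)) + 32 * (4 : ℝ)⁻¹ ^ n :=
      htail n _ (hXmem (n+1))
    have h4 : bpG g r X n (X (n+1)) < m n + (8 : ℝ)⁻¹ ^ n := (hpick n).2
    have h5 : m n ≤ bpG g r X n u := hmle n u hu
    have h6 : bpG g r X n u ≤ g u + Q u := hGn_le n u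
    have h8 : (8 : ℝ)⁻¹ ^ n ≤ (4 : ℝ)⁻¹ ^ n :=
      pow_le_pow_left₀ (by norm_num) (by norm_num) n
    linarith
  -- value estimate at x₀
  have hQx₀ : Q x₀ ≤ 4 / 3 := by
    have hsplit := Summable.sum_add_tsum_nat_add (f := fun i => bpSig r i * ‖x₀ - X i‖ ^ 2) 1 (hQsum x₀)
    have h0 : ∑ i ∈ Finset.range 1, bpSig r i * ‖x₀ - X i‖ ^ 2 = 0 := by
      simp [hX0]
    have hshift : Summable (fun i : ℕ => bpSig r (i + 1)) :=
      (summable_nat_add_iff 1).mpr hσsum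
    have hshift_sum : Summable (fun i : ℕ => bpSig r (i + 1) * r ^ 2) :=
      hshift.mul_right _
    have hbound : ∀ i : ℕ, bpSig r (i + 1) * ‖x₀ - X (i + 1)‖ ^ 2
        ≤ bpSig r (i + 1) * r ^ 2 := by
      intro i
      have hd : ‖x₀ - X (i+1)‖ ≤ r := by
        have hmem := Metric.mem_closedBall.mp (hXmem (i+1))
        rw [dist_comm] at hmem
        rw [← dist_eq_norm]
        exact hmem
      have h2 : ‖x₀ - X (i + 1)‖ ^ 2 ≤ r ^ 2 := by
        nlinarith [norm_nonneg (x₀ - X (i + 1))]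
      exact mul_le_mul_of_nonneg_left h2 (hσpos _).le
    have h1 : (∑' i : ℕ, bpSig r (i + 1) * ‖x₀ - X (i + 1)‖ ^ 2)
        ≤ ∑' i : ℕ, bpSig r (i + 1) * r ^ 2 := by
      refine Summable.tsum_le_tsum hbound ?_ hshift_sum
      exact Summable.of_nonneg_of_le
        (fun i => mul_nonneg (hσpos _).le (by positivity)) hbound hshift_sum
    have h2 : (∑' i : ℕ, bpSig r (i + 1) * r ^ 2) = 4 / 3 := by
      have heq : ∀ i : ℕ, bpSig r (i + 1) * r ^ 2 = 1 * (4:ℝ)⁻¹ ^ i := by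
        intro i
        unfold bpSig
        rw [pow_succ]
        field_simp
        ring
      rw [tsum_congr heq, tsum_mul_left,
        tsum_geometric_of_lt_one (by norm_num) (by norm_num)]
      norm_num
    have hQx : Q x₀ = (∑ i ∈ Finset.range 1, bpSig r i * ‖x₀ - X i‖ ^ 2)
        + ∑' i : ℕ, bpSig r (i + 1) * ‖x₀ - X (i + 1)‖ ^ 2 := by
      rw [hQu]; exact hsplit.symm
    rw [hQx, h0, zero_add]
    linarith
  have hGpval : g p + Q p ≤ g x₀ + 4 / 3 := by
    have := hmin x₀ hS0
    linarith
  have hgp_low : g x₀ - 1 ≤ g p := hbd p hpS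
  have hgp_up : g p ≤ g x₀ + 3 / 2 := by
    have := hQnonneg p
    linarith
  -- p is in the open ball
  have hterm0 : bpSig r 0 * ‖p - x₀‖ ^ 2 ≤ Q p := by
    have h := Summable.le_tsum (hQsum p) 0
      (fun j _ => mul_nonneg (hσpos j).le (by positivity))
    rw [hX0] at h
    rw [hQu]
    exact h
  have hσ0 : bpSig r 0 = 4 / r ^ 2 := by unfold bpSig; simp
  have hpball : dist p x₀ < r := by
    have hQp : Q p ≤ 7 / 3 := by linarith
    rw [hσ0] at hterm0
    have hrpos : (0:ℝ) < r ^ 2 := by positivity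
    have h1 : 4 / r ^ 2 * ‖p - x₀‖ ^ 2 ≤ 7 / 3 := le_trans hterm0 hQp
    have h2 : 4 * ‖p - x₀‖ ^ 2 ≤ 7 / 3 * r ^ 2 := by
      have h3 := mul_le_mul_of_nonneg_right h1 hrpos.le
      have h4 : 4 / r ^ 2 * ‖p - x₀‖ ^ 2 * r ^ 2 = 4 * ‖p - x₀‖ ^ 2 := by
        field_simp
      rw [h4] at h3
      linarith
    rw [dist_eq_norm]
    nlinarith [norm_nonneg (p - x₀), hr]
  refine ⟨p, hpball, hgp_up, fun u => -Q u, hQC.neg, ?_⟩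
  intro u hu
  have h := hmin u hu
  show g p - -(Q p) ≤ g u - -(Q u)
  linarith

end BP

/-- A proper lower semicontinuous function `f : H → ℝ ∪ {+∞}` on a real Hilbert space is
subdifferentiable on a dense subset of its domain `{x : f x < +∞}`. -/
theorem dense_subdifferentiability
    {H : Type*} [NormedAddCommGroup H] [InnerProductSpace ℝ H] [CompleteSpace H]
    (f : H → EReal) (hbot : ∀ x, f x ≠ ⊥)
    (hlsc : LowerSemicontinuous f) (hproper : ∃ x, f x ≠ ⊤) :
    ∀ x : H, f x ≠ ⊤ →
      x ∈ closure {p : H | f p ≠ ⊤ ∧ (esubdiff f p).Nonempty} := by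
  intro x hxt
  rw [Metric.mem_closure_iff]
  intro ε hε
  set a : ℝ := (f x).toReal with ha
  have hfa : f x = ((a : ℝ) : EReal) := (EReal.coe_toReal hxt (hbot x)).symm
  -- find a ball on which f > a - 1
  have hev : ∀ᶠ z in 𝓝 x, ((a - 1 : ℝ) : EReal) < f z := by
    refine hlsc x _ ?_
    show ((a - 1 : ℝ) : EReal) < f x
    rw [hfa]
    exact_mod_cast sub_one_lt a
  obtain ⟨δ, hδ, hδball⟩ := Metric.eventually_nhds_iff.mp hev
  set r : ℝ := min (δ / 2) (ε / 2) with hrdef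
  have hr : 0 < r := lt_min (by linarith) (by linarith)
  have hrδ : r < δ := lt_of_le_of_lt (min_le_left _ _) (by linarith)
  have hrε : r < ε := lt_of_le_of_lt (min_le_right _ _) (by linarith)
  have hball : ∀ z ∈ Metric.closedBall x r, ((a - 1 : ℝ) : EReal) < f z := by
    intro z hz
    exact hδball (lt_of_le_of_lt (Metric.mem_closedBall.mp hz) hrδ)
  -- the truncated real-valued function
  set g : H → ℝ := fun z => (min (f z) ((a + 2 : ℝ) : EReal)).toReal with hgdef
  have hmin_ne_top : ∀ z, min (f z) ((a + 2 : ℝ) : EReal) ≠ ⊤ := by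
    intro z
    exact ne_top_of_le_ne_top (EReal.coe_ne_top _) (min_le_right _ _)
  have hmin_ne_bot : ∀ z, min (f z) ((a + 2 : ℝ) : EReal) ≠ ⊥ := by
    intro z
    rw [ne_eq, min_eq_bot]
    push_neg
    exact ⟨hbot z, EReal.coe_ne_bot _⟩
  have hgcoe : ∀ z, ((g z : ℝ) : EReal) = min (f z) ((a + 2 : ℝ) : EReal) := by
    intro z
    exact EReal.coe_toReal (hmin_ne_top z) (hmin_ne_bot z)
  have hglsc : LowerSemicontinuous g := by
    intro z y hy
    have hy' : ((y : ℝ) : EReal) < min (f z) ((a + 2 : ℝ) : EReal) := by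
      rw [← hgcoe z]
      exact_mod_cast hy
    rw [lt_min_iff] at hy'
    have hyf : ((y : ℝ) : EReal) < f z := hy'.1
    have hya : y < a + 2 := by exact_mod_cast hy'.2
    filter_upwards [hlsc z _ hyf] with w hw
    have hlt : ((y : ℝ) : EReal) < min (f w) ((a + 2 : ℝ) : EReal) := by
      rw [lt_min_iff]
      exact ⟨hw, by exact_mod_cast hya⟩
    rw [← hgcoe w] at hlt
    exact_mod_cast hlt
  have hgx : g x = a := by
    have hmx : min (f x) ((a + 2 : ℝ) : EReal) = ((a : ℝ) : EReal) := by
      rw [hfa, min_eq_left]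
      exact_mod_cast (by linarith : a ≤ a + 2)
    simp only [hgdef, hmx, EReal.toReal_coe]
  have hgbd : ∀ u ∈ Metric.closedBall x r, g x - 1 ≤ g u := by
    intro u hu
    rw [hgx]
    have h1 : ((a - 1 : ℝ) : EReal) < min (f u) ((a + 2 : ℝ) : EReal) := by
      rw [lt_min_iff]
      refine ⟨hball u hu, ?_⟩
      exact_mod_cast (by linarith : a - 1 < a + 2)
    rw [← hgcoe u] at h1
    have h2 : a - 1 < g u := by exact_mod_cast h1
    linarith
  obtain ⟨p, hpr, hgp_up, φ, hφC, hφmin⟩ := bp_main g hglsc x r hr hgbd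
  rw [hgx] at hgp_up
  -- f p is finite and equals g p
  have hfp_le : f p ≤ ((a + 2 : ℝ) : EReal) := by
    by_contra hcon
    push_neg at hcon
    have hmr : min (f p) ((a + 2 : ℝ) : EReal) = ((a + 2 : ℝ) : EReal) :=
      min_eq_right hcon.le
    have h2 : g p = a + 2 := by
      simp only [hgdef, hmr, EReal.toReal_coe]
    linarith
  have hfp_ne_top : f p ≠ ⊤ := ne_top_of_le_ne_top (EReal.coe_ne_top _) hfp_le
  have hgpf : ((g p : ℝ) : EReal) = f p := by
    rw [hgcoe p, min_eq_left hfp_le]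
  -- neighborhood contained in the closed ball around x
  have hnb : Metric.closedBall x r ∈ 𝓝 p := by
    have hsub : Metric.ball p (r - dist p x) ⊆ Metric.closedBall x r := by
      intro z hz
      rw [Metric.mem_ball] at hz
      rw [Metric.mem_closedBall]
      calc dist z x ≤ dist z p + dist p x := dist_triangle _ _ _
      _ ≤ r := by linarith
    exact Filter.mem_of_superset (Metric.ball_mem_nhds p (by linarith)) hsub
  refine ⟨p, ⟨hfp_ne_top, ⟨fderiv ℝ φ p, φ, hφC, rfl, ?_⟩⟩, ?_⟩
  · filter_upwards [hnb] with z hz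
    have hineq : g p - φ p ≤ g z - φ z := hφmin z hz
    have h1 : f p - ((φ p : ℝ) : EReal) = (((g p - φ p : ℝ)) : EReal) := by
      rw [← hgpf]
      exact (EReal.coe_sub _ _).symm
    have h2 : (((g z - φ z : ℝ)) : EReal) ≤ f z - ((φ z : ℝ) : EReal) := by
      have hle : ((g z : ℝ) : EReal) ≤ f z := by
        rw [hgcoe z]
        exact min_le_left _ _
      calc (((g z - φ z : ℝ)) : EReal)
          = ((g z : ℝ) : EReal) - ((φ z : ℝ) : EReal) := EReal.coe_sub _ _
      _ ≤ f z - ((φ z : ℝ) : EReal) := EReal.sub_le_sub hle le_rfl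
    rw [h1]
    refine le_trans ?_ h2
    exact_mod_cast hineq
  · rw [dist_comm]
    exact lt_of_lt_of_le hpr hrε.le
end

section
/- Let H be a real Hilbert space and f : H → ℝ a Borel measurable function such that D⁻f(p) ∪ D⁺f(p) ≠ ∅ for every p ∈ H. Define Φ : H → ℝ by Φ(p) = inf{ ‖ζ‖ : ζ ∈ D⁻f(p) ∪ D⁺f(p) }. Then for every C¹ path γ : [0,T] → H parameterized by arc length (i.e. ‖γ'(t)‖ = 1 for all t ∈ [0,T]), the Lebesgue outer measure of the image f(γ([0,T])) ⊆ ℝ is at most the upper Lebesgue integral ∫₀ᵀ Φ(γ(t)) dt. -/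
open Filter Topology MeasureTheory

/-- The viscosity subdifferential of `f : H → ℝ` at `p`. -/
def subdiffR {H : Type*} [NormedAddCommGroup H] [InnerProductSpace ℝ H]
    (f : H → ℝ) (p : H) : Set (H →L[ℝ] ℝ) :=
  {ζ | ∃ φ : H → ℝ, ContDiff ℝ 1 φ ∧ fderiv ℝ φ p = ζ ∧
    IsLocalMin (fun x => f x - φ x) p}

/-- The viscosity superdifferential of `f : H → ℝ` at `p`. -/
def superdiffR {H : Type*} [NormedAddCommGroup H] [InnerProductSpace ℝ H]
    (f : H → ℝ) (p : H) : Set (H →L[ℝ] ℝ) :=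
  {ζ | ∃ φ : H → ℝ, ContDiff ℝ 1 φ ∧ fderiv ℝ φ p = ζ ∧
    IsLocalMax (fun x => f x - φ x) p}

/-- `Φ(p) = inf {‖ζ‖ : ζ ∈ D⁻f(p) ∪ D⁺f(p)}`. -/
noncomputable def subgradNormInf {H : Type*} [NormedAddCommGroup H] [InnerProductSpace ℝ H]
    (f : H → ℝ) (p : H) : ℝ :=
  sInf ((fun ζ : H →L[ℝ] ℝ => ‖ζ‖) '' (subdiffR f p ∪ superdiffR f p))

namespace GodefroyAux

open Set
open scoped NNReal ENNReal

/-- Points near which `h` satisfies the relaxed subgradient inequality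
with slope `c` on a window of radius `r`. -/
def Asub (h : ℝ → ℝ) (ε c r : ℝ) : Set ℝ :=
  {t | ∀ s, |s - t| ≤ r → h t + c * (s - t) - ε * |s - t| ≤ h s}

/-- Points near which `h` satisfies the relaxed supergradient inequality
with slope `c` on a window of radius `r`. -/
def Asup (h : ℝ → ℝ) (ε c r : ℝ) : Set ℝ :=
  {t | ∀ s, |s - t| ≤ r → h s ≤ h t + c * (s - t) + ε * |s - t|}

lemma Asup_eq_Asub (h : ℝ → ℝ) (ε c r : ℝ) :
    Asup h ε c r = Asub (fun x => -h x) ε (-c) r := by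
  ext t
  simp only [Asub, Asup, Set.mem_setOf_eq]
  refine ⟨fun H s hs => ?_, fun H s hs => ?_⟩
  · have := H s hs; linarith
  · have := H s hs; linarith

/-- Right window dilation of a measurable set is measurable. -/
lemma measurableSet_windowR (E : Set ℝ) (hE : MeasurableSet E) {r : ℝ} (hr : 0 ≤ r) :
    MeasurableSet {t : ℝ | ∃ s, t ≤ s ∧ s ≤ t + r ∧ s ∈ E} := by
  have heq : {t : ℝ | ∃ s, t ≤ s ∧ s ≤ t + r ∧ s ∈ E}
      = (⋃ x ∈ E, Ioo (x - r) x) ∪ E ∪ (· + r) ⁻¹' E := by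
    ext t
    constructor
    · rintro ⟨s, hts, hst, hsE⟩
      rcases eq_or_lt_of_le hts with rfl | hlt
      · exact Or.inl (Or.inr hsE)
      rcases eq_or_lt_of_le hst with heq' | hlt'
      · exact Or.inr (by simpa [Set.mem_preimage, ← heq'] using hsE)
      · exact Or.inl (Or.inl (mem_iUnion₂.2 ⟨s, hsE, by constructor <;> linarith⟩))
    · rintro ((hO | hEt) | hpre)
      · rcases mem_iUnion₂.1 hO with ⟨x, hxE, hx1, hx2⟩
        exact ⟨x, le_of_lt hx2, by linarith, hxE⟩
      · exact ⟨t, le_refl t, by linarith, hEt⟩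
      · exact ⟨t + r, by linarith, le_refl _, hpre⟩
  rw [heq]
  exact ((isOpen_biUnion fun x _ => isOpen_Ioo).measurableSet.union hE).union
    (hE.preimage (measurable_id.add_const r))

/-- Left window dilation of a measurable set is measurable. -/
lemma measurableSet_windowL (E : Set ℝ) (hE : MeasurableSet E) {r : ℝ} (hr : 0 ≤ r) :
    MeasurableSet {t : ℝ | ∃ s, t - r ≤ s ∧ s ≤ t ∧ s ∈ E} := by
  have heq : {t : ℝ | ∃ s, t - r ≤ s ∧ s ≤ t ∧ s ∈ E}
      = (⋃ x ∈ E, Ioo x (x + r)) ∪ E ∪ (· - r) ⁻¹' E := by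
    ext t
    constructor
    · rintro ⟨s, hts, hst, hsE⟩
      rcases eq_or_lt_of_le hst with rfl | hlt
      · exact Or.inl (Or.inr hsE)
      rcases eq_or_lt_of_le hts with heq' | hlt'
      · exact Or.inr (by simp only [Set.mem_preimage]; rw [← heq'] at hsE; exact hsE)
      · exact Or.inl (Or.inl (mem_iUnion₂.2 ⟨s, hsE, by constructor <;> linarith⟩))
    · rintro ((hO | hEt) | hpre)
      · rcases mem_iUnion₂.1 hO with ⟨x, hxE, hx1, hx2⟩
        exact ⟨x, by linarith, le_of_lt hx1, hxE⟩
      · exact ⟨t, by linarith, le_refl t, hEt⟩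
      · exact ⟨t - r, le_refl _, by linarith, hpre⟩
  rw [heq]
  exact ((isOpen_biUnion fun x _ => isOpen_Ioo).measurableSet.union hE).union
    (hE.preimage (measurable_id.sub_const r))

lemma measurableSet_Asub {h : ℝ → ℝ} (hh : Measurable h) (ε c : ℝ) {r : ℝ} (hr : 0 ≤ r) :
    MeasurableSet (Asub h ε c r) := by
  have u₁m : Measurable (fun t : ℝ => h t - (c - ε) * t) :=
    hh.sub (measurable_const.mul measurable_id)
  have u₂m : Measurable (fun t : ℝ => h t - (c + ε) * t) :=
    hh.sub (measurable_const.mul measurable_id)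
  have hcompl : (Asub h ε c r)ᶜ
      = ⋃ a : ℚ,
        (({t | (a : ℝ) < h t - (c - ε) * t} ∩
           {t : ℝ | ∃ s, t ≤ s ∧ s ≤ t + r ∧ s ∈ {x | h x - (c - ε) * x < (a : ℝ)}}) ∪
         ({t | (a : ℝ) < h t - (c + ε) * t} ∩
           {t : ℝ | ∃ s, t - r ≤ s ∧ s ≤ t ∧ s ∈ {x | h x - (c + ε) * x < (a : ℝ)}})) := by
    ext t
    simp only [Set.mem_compl_iff, Asub, Set.mem_setOf_eq, Set.mem_iUnion, Set.mem_union,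
      Set.mem_inter_iff, not_forall]
    constructor
    · rintro ⟨s, hsr, hs⟩
      push_neg at hs
      rcases le_or_gt t s with hts | hst
      · have habs : |s - t| = s - t := abs_of_nonneg (by linarith)
        rw [habs] at hs hsr
        have key : h s - (c - ε) * s < h t - (c - ε) * t := by nlinarith
        obtain ⟨a, ha1, ha2⟩ := exists_rat_btwn key
        exact ⟨a, Or.inl ⟨ha2, s, hts, by linarith, ha1⟩⟩
      · have habs : |s - t| = t - s := by
          rw [abs_of_neg (by linarith : s - t < 0)]; ring
        rw [habs] at hs hsr
        have key : h s - (c + ε) * s < h t - (c + ε) * t := by nlinarith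
        obtain ⟨a, ha1, ha2⟩ := exists_rat_btwn key
        exact ⟨a, Or.inr ⟨ha2, s, by linarith, le_of_lt hst, ha1⟩⟩
    · rintro ⟨a, ⟨hat, s, hts, hst, hsa⟩ | ⟨hat, s, hts, hst, hsa⟩⟩
      · refine ⟨s, ?_, ?_⟩
        · rw [abs_of_nonneg (by linarith : (0:ℝ) ≤ s - t)]; linarith
        · push_neg
          rw [abs_of_nonneg (by linarith : (0:ℝ) ≤ s - t)]; nlinarith
      · refine ⟨s, ?_, ?_⟩
        · rw [abs_of_nonpos (by linarith : s - t ≤ 0)]; linarith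
        · push_neg
          rw [abs_of_nonpos (by linarith : s - t ≤ 0)]; nlinarith
  rw [← compl_compl (Asub h ε c r), hcompl]
  refine MeasurableSet.compl (MeasurableSet.iUnion fun a => MeasurableSet.union ?_ ?_)
  · exact (u₁m measurableSet_Ioi).inter
      (measurableSet_windowR _ (u₁m measurableSet_Iio) hr)
  · exact (u₂m measurableSet_Ioi).inter
      (measurableSet_windowL _ (u₂m measurableSet_Iio) hr)

lemma measurableSet_Asup {h : ℝ → ℝ} (hh : Measurable h) (ε c : ℝ) {r : ℝ} (hr : 0 ≤ r) :
    MeasurableSet (Asup h ε c r) := by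
  rw [Asup_eq_Asub]
  exact measurableSet_Asub hh.neg ε (-c) hr

lemma lipschitzOnWith_Asub {h : ℝ → ℝ} {ε c r : ℝ} (hε : 0 ≤ ε) {S : Set ℝ}
    (hS : S ⊆ Asub h ε c r) (hdiam : ∀ x ∈ S, ∀ y ∈ S, |x - y| ≤ r) :
    LipschitzOnWith (Real.toNNReal (|c| + ε)) h S := by
  apply LipschitzOnWith.of_dist_le_mul
  intro x hx y hy
  rw [Real.dist_eq, Real.dist_eq,
    Real.coe_toNNReal _ (by positivity : (0:ℝ) ≤ |c| + ε)]
  have h1 := hS hx y (by rw [abs_sub_comm]; exact hdiam x hx y hy)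
  have h2 := hS hy x (hdiam x hx y hy)
  have e1 : -(c * (y - x)) ≤ |c| * |x - y| := by
    calc -(c * (y - x)) ≤ |c * (y - x)| := neg_le_abs _
    _ = |c| * |y - x| := abs_mul _ _
    _ = |c| * |x - y| := by rw [abs_sub_comm]
  have e2 : -(c * (x - y)) ≤ |c| * |x - y| := by
    calc -(c * (x - y)) ≤ |c * (x - y)| := neg_le_abs _
    _ = |c| * |x - y| := abs_mul _ _
  have e3 : |y - x| = |x - y| := abs_sub_comm _ _
  rw [e3] at h1
  rw [abs_le]
  constructor <;> nlinarith

lemma lipschitzOnWith_Asup {h : ℝ → ℝ} {ε c r : ℝ} (hε : 0 ≤ ε) {S : Set ℝ}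
    (hS : S ⊆ Asup h ε c r) (hdiam : ∀ x ∈ S, ∀ y ∈ S, |x - y| ≤ r) :
    LipschitzOnWith (Real.toNNReal (|c| + ε)) h S := by
  apply LipschitzOnWith.of_dist_le_mul
  intro x hx y hy
  rw [Real.dist_eq, Real.dist_eq,
    Real.coe_toNNReal _ (by positivity : (0:ℝ) ≤ |c| + ε)]
  have h1 := hS hx y (by rw [abs_sub_comm]; exact hdiam x hx y hy)
  have h2 := hS hy x (hdiam x hx y hy)
  have e1 : c * (y - x) ≤ |c| * |x - y| := by
    calc c * (y - x) ≤ |c * (y - x)| := le_abs_self _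
    _ = |c| * |y - x| := abs_mul _ _
    _ = |c| * |x - y| := by rw [abs_sub_comm]
  have e2 : c * (x - y) ≤ |c| * |x - y| := by
    calc c * (x - y) ≤ |c * (x - y)| := le_abs_self _
    _ = |c| * |x - y| := abs_mul _ _
  have e3 : |y - x| = |x - y| := abs_sub_comm _ _
  rw [e3] at h1
  rw [abs_le]
  constructor <;> nlinarith

lemma volume_image_le_of_lipschitzOnWith {h : ℝ → ℝ} {S : Set ℝ} {K : ℝ≥0}
    (hl : LipschitzOnWith K h S) : volume (h '' S) ≤ (K : ℝ≥0∞) * volume S := by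
  have H := hl.hausdorffMeasure_image_le (zero_le_one (α := ℝ))
  rw [MeasureTheory.hausdorffMeasure_real] at H
  simpa using H

/-- The one-dimensional core of Godefroy's mean value inequality. -/
lemma oneD (h : ℝ → ℝ) (hh : Measurable h) (T : ℝ) (hT : 0 ≤ T) (Φ : ℝ → ℝ)
    (hcov : ∀ t ∈ Icc (0:ℝ) T, ∀ ε : ℝ, 0 < ε → ∃ c : ℚ, |(c : ℝ)| ≤ Φ t + ε ∧
      ∃ n : ℕ, t ∈ Asub h ε c (1/(n+1)) ∪ Asup h ε c (1/(n+1)))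
    (g : ℝ → ℝ≥0∞) (hg : Measurable g)
    (hge : ∀ t ∈ Icc (0:ℝ) T, ENNReal.ofReal (Φ t) ≤ g t) :
    volume (h '' Icc (0:ℝ) T) ≤ ∫⁻ t in Icc (0:ℝ) T, g t := by
  set I : Set ℝ := Icc (0:ℝ) T with hI
  refine ENNReal.le_of_forall_pos_le_add fun η hη hfin => ?_
  set ε : ℝ := (η : ℝ) / (3 * (T + 1)) with hε
  have hεpos : 0 < ε := by
    apply div_pos (by exact_mod_cast hη) (by linarith)
  -- the pieces
  set P : ℚ × ℕ × ℤ × Bool → Set ℝ := fun i =>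
    (if i.2.2.2 = true then Asub h ε i.1 (1/(i.2.1+1)) else Asup h ε i.1 (1/(i.2.1+1))) ∩
      Icc ((i.2.2.1 : ℝ) * (1/(i.2.1+1))) (((i.2.2.1 : ℝ) + 1) * (1/(i.2.1+1))) with hP
  have hrpos : ∀ n : ℕ, (0:ℝ) < 1/(n+1) := fun n => by positivity
  have hPmeas : ∀ i, MeasurableSet (P i) := by
    intro i
    refine MeasurableSet.inter ?_ measurableSet_Icc
    split_ifs
    · exact measurableSet_Asub hh ε _ (le_of_lt (hrpos _))
    · exact measurableSet_Asup hh ε _ (le_of_lt (hrpos _))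
  have hPdiam : ∀ i, ∀ x ∈ P i, ∀ y ∈ P i, |x - y| ≤ 1/(i.2.1+1) := by
    intro i x hx y hy
    obtain ⟨-, hx1, hx2⟩ := hx
    obtain ⟨-, hy1, hy2⟩ := hy
    rw [abs_le]
    constructor <;> nlinarith
  have hPlip : ∀ i, LipschitzOnWith (Real.toNNReal (|(i.1 : ℝ)| + ε)) h (P i) := by
    intro i
    by_cases hb : i.2.2.2 = true
    · refine lipschitzOnWith_Asub (le_of_lt hεpos) ?_ (hPdiam i)
      intro x hx
      have := hx.1
      rwa [if_pos hb] at this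
    · refine lipschitzOnWith_Asup (le_of_lt hεpos) ?_ (hPdiam i)
      intro x hx
      have := hx.1
      rwa [if_neg hb] at this
  -- coverage
  have hcover : ∀ t ∈ I, ∃ i : ℚ × ℕ × ℤ × Bool, t ∈ P i ∧ |(i.1 : ℝ)| ≤ Φ t + ε := by
    intro t ht
    obtain ⟨c, hc, n, hmem⟩ := hcov t ht ε hεpos
    set m : ℤ := ⌊t / (1/(n+1))⌋ with hm
    have hmr : (m : ℝ) * (1/(n+1)) ≤ t := by
      rw [← le_div_iff₀ (hrpos n)]
      exact Int.floor_le _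
    have hmr2 : t ≤ ((m : ℝ) + 1) * (1/(n+1)) := by
      rw [← div_le_iff₀ (hrpos n)]
      exact (Int.lt_floor_add_one (t / (1/(n+1)))).le
    rcases hmem with hmem | hmem
    · exact ⟨(c, n, m, true), ⟨by rw [if_pos rfl]; exact hmem, hmr, hmr2⟩, hc⟩
    · exact ⟨(c, n, m, false), ⟨by rw [if_neg (by simp)]; exact hmem, hmr, hmr2⟩, hc⟩
  -- the level sets of g
  set C : ℕ → Set ℝ := fun k =>
    I ∩ g ⁻¹' (Ico (ENNReal.ofReal (k * ε)) (ENNReal.ofReal ((k + 1) * ε))) with hC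
  set Cinf : Set ℝ := I ∩ g ⁻¹' {∞} with hCinf
  have hImeas : MeasurableSet I := measurableSet_Icc
  have hCmeas : ∀ k, MeasurableSet (C k) :=
    fun k => hImeas.inter (hg measurableSet_Ico)
  have hCinfmeas : MeasurableSet Cinf := hImeas.inter (hg (measurableSet_singleton _))
  have hCdisj : Pairwise (Function.onFun Disjoint C) := by
    have aux : ∀ i j : ℕ, i < j → Disjoint (C i) (C j) := by
      intro i j hij
      rw [Set.disjoint_left]
      rintro t ⟨-, hti⟩ ⟨-, htj⟩
      have h1 : g t < ENNReal.ofReal ((i + 1) * ε) := hti.2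
      have h2 : ENNReal.ofReal ((j : ℝ) * ε) ≤ g t := htj.1
      have h3 : ((i : ℝ) + 1) * ε ≤ (j : ℝ) * ε := by
        have : (i : ℝ) + 1 ≤ (j : ℝ) := by exact_mod_cast hij
        nlinarith
      exact absurd (lt_of_lt_of_le (lt_of_le_of_lt h2 h1) (ENNReal.ofReal_le_ofReal h3))
        (lt_irrefl _)
    exact fun i j hij => hij.lt_or_gt.elim (fun hl => aux i j hl) (fun hl => (aux j i hl).symm)
  have hCsub : ∀ k, C k ⊆ I := fun k => Set.inter_subset_left
  have hIcover : I ⊆ (⋃ k, C k) ∪ Cinf := by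
    intro t ht
    by_cases hgt : g t = ∞
    · exact Or.inr ⟨ht, hgt⟩
    · left
      have hex : ∃ k : ℕ, g t < ENNReal.ofReal ((k + 1) * ε) := by
        obtain ⟨n, hn⟩ := ENNReal.exists_nat_gt (lt_top_iff_ne_top.2 hgt).ne
        refine ⟨Nat.ceil ((n : ℝ) / ε), lt_of_lt_of_le hn ?_⟩
        have h1 : (n : ℝ) ≤ (Nat.ceil ((n : ℝ) / ε) + 1) * ε := by
          have h2 : (n : ℝ) / ε ≤ Nat.ceil ((n : ℝ) / ε) := Nat.le_ceil _
          have h3 : (n : ℝ) ≤ (Nat.ceil ((n : ℝ) / ε) : ℝ) * ε := by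
            rw [div_le_iff₀ hεpos] at h2; linarith
          nlinarith
        calc ((n : ℕ) : ℝ≥0∞) = ENNReal.ofReal (n : ℝ) := by
              rw [ENNReal.ofReal_natCast]
        _ ≤ ENNReal.ofReal ((Nat.ceil ((n : ℝ) / ε) + 1) * ε) := ENNReal.ofReal_le_ofReal h1
      refine Set.mem_iUnion.2 ⟨Nat.find hex, ht, ?_, Nat.find_spec hex⟩
      rcases Nat.eq_zero_or_pos (Nat.find hex) with h0 | hpos
      · rw [h0]
        simp
      · obtain ⟨j, hj⟩ := Nat.exists_eq_succ_of_ne_zero (Nat.pos_iff_ne_zero.1 hpos)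
        have := Nat.find_min hex (m := j) (by omega)
        rw [not_lt] at this
        have hcast : ((j : ℝ) + 1) * ε = ((Nat.find hex : ℝ)) * ε := by
          rw [hj]; push_cast; ring
        rwa [hcast] at this
  -- the key per-level estimate
  have key : ∀ k : ℕ, volume (h '' C k) ≤
      (∫⁻ t in C k, g t) + ENNReal.ofReal (3 * ε) * volume (C k) := by
    intro k
    set Mk : ℝ≥0∞ := ENNReal.ofReal (((k : ℝ) + 3) * ε) with hMk
    set Pk : ℚ × ℕ × ℤ × Bool → Set ℝ := fun i =>
      if |(i.1 : ℝ)| ≤ ((k : ℝ) + 1) * ε + ε then P i ∩ C k else ∅ with hPk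
    have hPkmeas : ∀ i, MeasurableSet (Pk i) := by
      intro i
      simp only [hPk]
      split_ifs
      · exact (hPmeas i).inter (hCmeas k)
      · exact MeasurableSet.empty
    have hPksub : ∀ i, Pk i ⊆ C k := by
      intro i
      simp only [hPk]
      split_ifs
      · exact Set.inter_subset_right
      · exact Set.empty_subset _
    have hPkcov : C k ⊆ ⋃ i, Pk i := by
      intro t ht
      obtain ⟨i, hi, hile⟩ := hcover t (hCsub k ht)
      have hΦt : Φ t < ((k : ℝ) + 1) * ε := by
        have h1 : ENNReal.ofReal (Φ t) ≤ g t := hge t (hCsub k ht)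
        have h2 : g t < ENNReal.ofReal (((k : ℝ) + 1) * ε) := ht.2.2
        have := lt_of_le_of_lt h1 h2
        rcases le_or_gt (Φ t) 0 with h3 | h3
        · nlinarith
        · exact (ENNReal.ofReal_lt_ofReal_iff_of_nonneg (le_of_lt h3)).1 this
      refine Set.mem_iUnion.2 ⟨i, ?_⟩
      simp only [hPk]
      rw [if_pos (by linarith)]
      exact ⟨hi, ht⟩
    have hPkvol : ∀ i, ∀ S : Set ℝ, S ⊆ Pk i → volume (h '' S) ≤ Mk * volume S := by
      intro i S hSsub
      by_cases hcond : |(i.1 : ℝ)| ≤ ((k : ℝ) + 1) * ε + ε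
      · have hlip : LipschitzOnWith (Real.toNNReal (|(i.1 : ℝ)| + ε)) h S := by
          refine (hPlip i).mono ?_
          refine hSsub.trans ?_
          simp only [hPk]
          rw [if_pos hcond]
          exact Set.inter_subset_left
        calc volume (h '' S)
            ≤ (Real.toNNReal (|(i.1 : ℝ)| + ε) : ℝ≥0∞) * volume S :=
              volume_image_le_of_lipschitzOnWith hlip
        _ ≤ Mk * volume S := by
              apply mul_le_mul_left
              have hrfl : ((Real.toNNReal (|(i.1 : ℝ)| + ε)) : ℝ≥0∞)
                  = ENNReal.ofReal (|(i.1 : ℝ)| + ε) := rfl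
              rw [hrfl, hMk]
              exact ENNReal.ofReal_le_ofReal (by linarith)
      · have : Pk i = ∅ := by simp only [hPk]; rw [if_neg hcond]
        rw [this] at hSsub
        have hS0 : S = ∅ := Set.subset_empty_iff.1 hSsub
        simp [hS0]
    obtain ⟨e, he⟩ := exists_surjective_nat (ℚ × ℕ × ℤ × Bool)
    set Q : ℕ → Set ℝ := disjointed (fun j => Pk (e j)) with hQ
    have hQmeas : ∀ j, MeasurableSet (Q j) :=
      MeasurableSet.disjointed (fun j => hPkmeas (e j))
    have hQdisj : Pairwise (Function.onFun Disjoint Q) := disjoint_disjointed _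
    have hQunion : ⋃ j, Q j = ⋃ i, Pk i := by
      rw [hQ, iUnion_disjointed]
      exact he.iUnion_comp Pk
    calc volume (h '' C k)
        ≤ volume (h '' ⋃ j, Q j) := by
          apply measure_mono
          apply Set.image_mono
          rw [hQunion]; exact hPkcov
    _ = volume (⋃ j, h '' Q j) := by rw [Set.image_iUnion]
    _ ≤ ∑' j, volume (h '' Q j) := measure_iUnion_le _
    _ ≤ ∑' j, Mk * volume (Q j) :=
          ENNReal.tsum_le_tsum fun j => hPkvol (e j) _ (disjointed_subset _ j)
    _ = Mk * ∑' j, volume (Q j) := ENNReal.tsum_mul_left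
    _ = Mk * volume (⋃ j, Q j) := by rw [measure_iUnion hQdisj hQmeas]
    _ ≤ Mk * volume (C k) := by
          apply mul_le_mul_right
          apply measure_mono
          rw [hQunion]
          exact Set.iUnion_subset fun i => hPksub i
    _ ≤ (∫⁻ t in C k, g t) + ENNReal.ofReal (3 * ε) * volume (C k) := by
          have hsplit : Mk = ENNReal.ofReal ((k : ℝ) * ε) + ENNReal.ofReal (3 * ε) := by
            rw [hMk, ← ENNReal.ofReal_add (by positivity) (by positivity)]
            ring_nf
          rw [hsplit, add_mul]
          apply add_le_add_left
          have hconst : ENNReal.ofReal ((k : ℝ) * ε) * volume (C k)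
              = ∫⁻ _ in C k, ENNReal.ofReal ((k : ℝ) * ε) := by
            rw [setLIntegral_const]
          rw [hconst]
          exact setLIntegral_mono' (hCmeas k) fun t ht => ht.2.1
  -- the infinite part
  by_cases hv : volume Cinf = 0
  · have hCinfim : volume (h '' Cinf) = 0 := by
      have hsub : h '' Cinf ⊆ ⋃ i : ℚ × ℕ × ℤ × Bool, h '' (P i ∩ Cinf) := by
        rintro y ⟨t, ht, rfl⟩
        obtain ⟨i, hi, -⟩ := hcover t ht.1
        exact Set.mem_iUnion.2 ⟨i, t, ⟨hi, ht⟩, rfl⟩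
      refine measure_mono_null hsub (measure_iUnion_null fun i => ?_)
      have h1 : volume (h '' (P i ∩ Cinf))
          ≤ (Real.toNNReal (|(i.1 : ℝ)| + ε) : ℝ≥0∞) * volume (P i ∩ Cinf) :=
        volume_image_le_of_lipschitzOnWith ((hPlip i).mono Set.inter_subset_left)
      have h2 : volume (P i ∩ Cinf) = 0 :=
        measure_mono_null Set.inter_subset_right hv
      rw [h2, mul_zero] at h1
      exact le_antisymm h1 zero_le
    have hfinal : volume (h '' I) ≤ (∫⁻ t in I, g t) + ENNReal.ofReal (3 * ε) * ENNReal.ofReal T := by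
      calc volume (h '' I)
          ≤ volume ((⋃ k, h '' C k) ∪ h '' Cinf) := by
            apply measure_mono
            intro y hy
            obtain ⟨t, ht, rfl⟩ := hy
            rcases hIcover ht with htC | htC
            · obtain ⟨k, hk⟩ := Set.mem_iUnion.1 htC
              exact Or.inl (Set.mem_iUnion.2 ⟨k, t, hk, rfl⟩)
            · exact Or.inr ⟨t, htC, rfl⟩
      _ ≤ volume (⋃ k, h '' C k) + volume (h '' Cinf) := measure_union_le _ _
      _ = volume (⋃ k, h '' C k) := by rw [hCinfim, add_zero]
      _ ≤ ∑' k, volume (h '' C k) := measure_iUnion_le _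
      _ ≤ ∑' k, ((∫⁻ t in C k, g t) + ENNReal.ofReal (3 * ε) * volume (C k)) :=
            ENNReal.tsum_le_tsum key
      _ = (∑' k, ∫⁻ t in C k, g t) + ENNReal.ofReal (3 * ε) * ∑' k, volume (C k) := by
            rw [ENNReal.tsum_add, ENNReal.tsum_mul_left]
      _ = (∫⁻ t in ⋃ k, C k, g t) + ENNReal.ofReal (3 * ε) * volume (⋃ k, C k) := by
            rw [lintegral_iUnion hCmeas hCdisj, measure_iUnion hCdisj hCmeas]
      _ ≤ (∫⁻ t in I, g t) + ENNReal.ofReal (3 * ε) * ENNReal.ofReal T := by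
            apply add_le_add
            · exact lintegral_mono_set (Set.iUnion_subset hCsub)
            · apply mul_le_mul_right
              have : volume I = ENNReal.ofReal T := by
                rw [hI, Real.volume_Icc, sub_zero]
              rw [← this]
              exact measure_mono (Set.iUnion_subset hCsub)
    refine hfinal.trans (add_le_add_right ?_ _)
    -- ofReal (3ε) * ofReal T ≤ η
    rw [← ENNReal.ofReal_mul (by positivity)]
    have harith : 3 * ε * T ≤ (η : ℝ) := by
      have hTT : T / (T + 1) ≤ 1 := by
        rw [div_le_one (by linarith)]; linarith
      have heq : 3 * ε * T = (η : ℝ) * (T / (T + 1)) := by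
        rw [hε]; field_simp
      rw [heq]
      calc (η : ℝ) * (T / (T + 1)) ≤ (η : ℝ) * 1 :=
            mul_le_mul_of_nonneg_left hTT (NNReal.coe_nonneg η)
      _ = (η : ℝ) := mul_one _
    calc ENNReal.ofReal (3 * ε * T) ≤ ENNReal.ofReal (η : ℝ) :=
          ENNReal.ofReal_le_ofReal harith
    _ = (η : ℝ≥0∞) := ENNReal.ofReal_coe_nnreal
  · -- infinite part has positive measure: the integral is infinite
    exfalso
    apply hfin.ne
    apply le_antisymm le_top
    calc (⊤ : ℝ≥0∞) = ⊤ * volume Cinf := by rw [ENNReal.top_mul hv]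
    _ = ∫⁻ _ in Cinf, (⊤ : ℝ≥0∞) := (setLIntegral_const _ _).symm
    _ ≤ ∫⁻ t in Cinf, g t := setLIntegral_mono' hCinfmeas fun t ht => le_of_eq ht.2.symm
    _ ≤ ∫⁻ t in I, g t := lintegral_mono_set Set.inter_subset_left

lemma stepA {H : Type*} [NormedAddCommGroup H] [InnerProductSpace ℝ H]
    (f : H → ℝ) (hne : ∀ p : H, (subdiffR f p ∪ superdiffR f p).Nonempty)
    (γ : ℝ → H) (hγ : ContDiff ℝ 1 γ) (t : ℝ) (hγt : ‖deriv γ t‖ = 1)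
    {ε : ℝ} (hε : 0 < ε) :
    ∃ c : ℚ, |(c : ℝ)| ≤ subgradNormInf f (γ t) + ε ∧ ∃ n : ℕ,
      t ∈ Asub (fun s => f (γ s)) ε c (1 / (n + 1)) ∪
          Asup (fun s => f (γ s)) ε c (1 / (n + 1)) := by
  set Φ := subgradNormInf f (γ t) with hΦ
  have hnonempty : ((fun ζ : H →L[ℝ] ℝ => ‖ζ‖) ''
      (subdiffR f (γ t) ∪ superdiffR f (γ t))).Nonempty :=
    (hne (γ t)).image _
  have hsinf : Φ < Φ + ε / 2 := lt_add_of_pos_right _ (by linarith)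
  obtain ⟨x, hxmem, hxlt⟩ := exists_lt_of_csInf_lt hnonempty hsinf
  obtain ⟨ζ, hζmem, rfl⟩ := hxmem
  -- derivative of γ
  have hγdiff : DifferentiableAt ℝ γ t := hγ.differentiable one_ne_zero t
  have hγd : HasDerivAt γ (deriv γ t) t := hγdiff.hasDerivAt
  rcases hζmem with hζ | hζ
  · -- subdifferential case
    obtain ⟨φ, hφ, hφd, hmin⟩ := hζ
    have hφd' : HasFDerivAt φ ζ (γ t) := by
      rw [← hφd]; exact (hφ.differentiable one_ne_zero (γ t)).hasFDerivAt
    have hψ : HasDerivAt (fun s => φ (γ s)) (ζ (deriv γ t)) t := hφd'.comp_hasDerivAt t hγd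
    set d := ζ (deriv γ t) with hd
    have hdle : |d| ≤ ‖ζ‖ := by
      have := ζ.le_opNorm (deriv γ t)
      rw [hγt, mul_one] at this
      simpa [hd] using this
    have hlo := hasDerivAt_iff_isLittleO.1 hψ
    have hev1 := hlo.def (half_pos hε)
    have hev2 : ∀ᶠ s in 𝓝 t, f (γ t) - φ (γ t) ≤ f (γ s) - φ (γ s) :=
      (hγ.continuous.continuousAt).eventually hmin
    obtain ⟨δ, hδpos, hδ⟩ := Metric.eventually_nhds_iff.1 (hev1.and hev2)
    obtain ⟨c, hc1, hc2⟩ := exists_rat_btwn (show d - ε / 2 < d + ε / 2 by linarith)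
    obtain ⟨n, hn⟩ := exists_nat_one_div_lt hδpos
    refine ⟨c, ?_, n, Or.inl ?_⟩
    · rw [abs_le]; rw [abs_le] at hdle; constructor <;> linarith
    · intro s hs
      have hsδ : dist s t < δ := by
        rw [Real.dist_eq]; exact lt_of_le_of_lt hs hn
      obtain ⟨hA, hB⟩ := hδ hsδ
      simp only [Real.norm_eq_abs, smul_eq_mul] at hA
      have hA' : |φ (γ s) - φ (γ t) - (s - t) * d| ≤ ε / 2 * |s - t| := hA
      have habs1 : |((c : ℝ) - d) * (s - t)| ≤ ε / 2 * |s - t| := by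
        rw [abs_mul]
        apply mul_le_mul_of_nonneg_right _ (abs_nonneg _)
        rw [abs_le]; constructor <;> linarith
      have habs2 := neg_abs_le (((c : ℝ) - d) * (s - t))
      have habs3 := le_abs_self (((c : ℝ) - d) * (s - t))
      have hA2 : (s - t) * d - φ (γ s) + φ (γ t) ≤ ε / 2 * |s - t| := by
        have := neg_abs_le (φ (γ s) - φ (γ t) - (s - t) * d)
        linarith
      have hB' : f (γ t) - φ (γ t) ≤ f (γ s) - φ (γ s) := hB
      have : f (γ t) + (c : ℝ) * (s - t) - ε * |s - t| ≤ f (γ s) := by linarith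
      simpa [Asub] using this
  · -- superdifferential case
    obtain ⟨φ, hφ, hφd, hmax⟩ := hζ
    have hφd' : HasFDerivAt φ ζ (γ t) := by
      rw [← hφd]; exact (hφ.differentiable one_ne_zero (γ t)).hasFDerivAt
    have hψ : HasDerivAt (fun s => φ (γ s)) (ζ (deriv γ t)) t := hφd'.comp_hasDerivAt t hγd
    set d := ζ (deriv γ t) with hd
    have hdle : |d| ≤ ‖ζ‖ := by
      have := ζ.le_opNorm (deriv γ t)
      rw [hγt, mul_one] at this
      simpa [hd] using this
    have hlo := hasDerivAt_iff_isLittleO.1 hψ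
    have hev1 := hlo.def (half_pos hε)
    have hev2 : ∀ᶠ s in 𝓝 t, f (γ s) - φ (γ s) ≤ f (γ t) - φ (γ t) :=
      (hγ.continuous.continuousAt).eventually hmax
    obtain ⟨δ, hδpos, hδ⟩ := Metric.eventually_nhds_iff.1 (hev1.and hev2)
    obtain ⟨c, hc1, hc2⟩ := exists_rat_btwn (show d - ε / 2 < d + ε / 2 by linarith)
    obtain ⟨n, hn⟩ := exists_nat_one_div_lt hδpos
    refine ⟨c, ?_, n, Or.inr ?_⟩
    · rw [abs_le]; rw [abs_le] at hdle; constructor <;> linarith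
    · intro s hs
      have hsδ : dist s t < δ := by
        rw [Real.dist_eq]; exact lt_of_le_of_lt hs hn
      obtain ⟨hA, hB⟩ := hδ hsδ
      simp only [Real.norm_eq_abs, smul_eq_mul] at hA
      have hA' : |φ (γ s) - φ (γ t) - (s - t) * d| ≤ ε / 2 * |s - t| := hA
      have habs1 : |((c : ℝ) - d) * (s - t)| ≤ ε / 2 * |s - t| := by
        rw [abs_mul]
        apply mul_le_mul_of_nonneg_right _ (abs_nonneg _)
        rw [abs_le]; constructor <;> linarith
      have habs2 := neg_abs_le (((c : ℝ) - d) * (s - t))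
      have habs3 := le_abs_self (((c : ℝ) - d) * (s - t))
      have hA2 : φ (γ s) - φ (γ t) - (s - t) * d ≤ ε / 2 * |s - t| := by
        have := le_abs_self (φ (γ s) - φ (γ t) - (s - t) * d)
        linarith
      have hB' : f (γ s) - φ (γ s) ≤ f (γ t) - φ (γ t) := hB
      have : f (γ s) ≤ f (γ t) + (c : ℝ) * (s - t) + ε * |s - t| := by linarith
      simpa [Asup] using this


end GodefroyAux

/-- Godefroy's mean value inequality in a real Hilbert space: if `f` is Borel and everywhere
sub- or superdifferentiable, then for every arc-length parameterized `C¹` path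
`γ : [0,T] → H`, the Lebesgue (outer) measure of `f(γ([0,T]))` is at most the upper Lebesgue
integral of `Φ ∘ γ` over `[0,T]` (expressed via measurable majorants `g` of `Φ ∘ γ`). -/
theorem godefroy_mean_value_inequality
    {H : Type*} [NormedAddCommGroup H] [InnerProductSpace ℝ H] [CompleteSpace H]
    [MeasurableSpace H] [BorelSpace H]
    (f : H → ℝ) (hf : Measurable f)
    (hne : ∀ p : H, (subdiffR f p ∪ superdiffR f p).Nonempty)
    (T : ℝ) (hT : 0 ≤ T) (γ : ℝ → H) (hγ : ContDiff ℝ 1 γ)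
    (harc : ∀ t ∈ Set.Icc (0 : ℝ) T, ‖deriv γ t‖ = 1)
    (g : ℝ → ENNReal) (hg : Measurable g)
    (hge : ∀ t ∈ Set.Icc (0 : ℝ) T, ENNReal.ofReal (subgradNormInf f (γ t)) ≤ g t) :
    volume (f '' (γ '' Set.Icc (0 : ℝ) T)) ≤ ∫⁻ t in Set.Icc (0 : ℝ) T, g t := by
  rw [Set.image_image]
  exact GodefroyAux.oneD (fun x => f (γ x)) (hf.comp hγ.continuous.measurable) T hT
    (fun t => subgradNormInf f (γ t))
    (fun t ht ε hε => GodefroyAux.stepA f hne γ hγ t (harc t ht) hε) g hg hge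
end

section
/- Let H be a real Hilbert space, f, g : H → ℝ bounded uniformly continuous functions, and F : H × H* → ℝ a function which is uniformly continuous in the sense that for every ε > 0 there exists δ > 0 such that ‖x − y‖ ≤ δ and ‖ζ − ξ‖ ≤ δ imply |F(x,ζ) − F(y,ξ)| ≤ ε. If u : H → ℝ is a bounded viscosity subsolution of u + F(x, du) = f and v : H → ℝ is a bounded viscosity supersolution of v + F(x, dv) = g, then v(x) − u(x) ≥ inf_{z∈H} ( g(z) − f(z) ) for every x ∈ H. -/
open Filter Topology

section BP

variable {E : Type*} [NormedAddCommGroup E] [InnerProductSpace ℝ E]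

noncomputable def BPpick (f : E → ℝ) (δ : ℝ) : E :=
  Classical.epsilon (fun z => f z ≤ sInf (Set.range f) + δ)

lemma BPpick_spec (f : E → ℝ) {δ : ℝ} (hb : BddBelow (Set.range f)) (hδ : 0 < δ) :
    f (BPpick f δ) ≤ sInf (Set.range f) + δ := by
  have hne : (Set.range f).Nonempty := ⟨f 0, ⟨0, rfl⟩⟩
  have hlt : sInf (Set.range f) < sInf (Set.range f) + δ := lt_add_of_pos_right _ hδ
  obtain ⟨a, ⟨x, rfl⟩, ha⟩ := exists_lt_of_csInf_lt hne hlt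
  exact Classical.epsilon_spec (⟨x, ha.le⟩ : ∃ z, f z ≤ sInf (Set.range f) + δ)

noncomputable def BPaux (h : E → ℝ) (ε : ℝ) : ℕ → (E → ℝ) × E
  | 0 => (h, BPpick h ε)
  | n+1 =>
      ((fun x => (BPaux h ε n).1 x + ε * (1/2:ℝ)^(n+1) * ‖x - (BPaux h ε n).2‖^2),
        BPpick (fun x => (BPaux h ε n).1 x + ε * (1/2:ℝ)^(n+1) * ‖x - (BPaux h ε n).2‖^2)
          (ε * (1/4:ℝ)^(n+1)))

set_option maxHeartbeats 1000000 in
/-- Borwein–Preiss smooth variational principle in a Hilbert space, quadratic form. -/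
theorem smoothVP [CompleteSpace E] (h : E → ℝ) (hlsc : LowerSemicontinuous h)
    {B : ℝ} (hB : ∀ x, B ≤ h x) {ε : ℝ} (hε : 0 < ε) :
    ∃ c p : E, ‖p - c‖ ≤ 30 ∧ (∀ x, h p + ε * ‖p - c‖^2 ≤ h x + ε * ‖x - c‖^2) ∧
      (∀ x, h p ≤ h x + 200 * ε) := by
  classical
  set z : ℕ → E := fun n => (BPaux h ε n).2 with hzdef
  set hs : ℕ → E → ℝ := fun n => (BPaux h ε n).1 with hhsdef
  have hs0 : hs 0 = h := rfl
  have hsucc : ∀ n x, hs (n+1) x = hs n x + ε * (1/2:ℝ)^(n+1) * ‖x - z n‖^2 := fun n x => rfl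
  have hzsucc : ∀ n, z (n+1) = BPpick (hs (n+1)) (ε * (1/4:ℝ)^(n+1)) := fun n => rfl
  have hs_eq : ∀ n x, hs n x = h x + ∑ j ∈ Finset.range n, ε * (1/2:ℝ)^(j+1) * ‖x - z j‖^2 := by
    intro n
    induction n with
    | zero => intro x; simp [hs0]
    | succ n ih =>
      intro x
      rw [hsucc n x, ih x, Finset.sum_range_succ]
      ring
  have hle : ∀ n x, h x ≤ hs n x := by
    intro n x
    rw [hs_eq n x]
    have : 0 ≤ ∑ j ∈ Finset.range n, ε * (1/2:ℝ)^(j+1) * ‖x - z j‖^2 :=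
      Finset.sum_nonneg fun j _ => by positivity
    linarith
  have hbdd : ∀ n, BddBelow (Set.range (hs n)) := by
    intro n
    exact ⟨B, fun a ⟨x, hx⟩ => hx ▸ (hB x).trans (hle n x)⟩
  set m : ℕ → ℝ := fun n => sInf (Set.range (hs n)) with hmdef
  have hzspec : ∀ n, hs n (z n) ≤ m n + ε * (1/4:ℝ)^n := by
    intro n
    cases n with
    | zero =>
      have := BPpick_spec h (by simpa [hs0] using hbdd 0) hε
      show h (BPpick h ε) ≤ sInf (Set.range h) + ε * (1/4:ℝ)^0
      simpa using this
    | succ n =>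
      rw [hzsucc n]
      exact BPpick_spec _ (hbdd (n+1)) (by positivity)
  have hm_le : ∀ n x, m n ≤ hs n x := fun n x => csInf_le (hbdd n) ⟨x, rfl⟩
  -- step estimate
  have hd : ∀ n, ‖z (n+1) - z n‖ ≤ 2 * Real.sqrt (1/2) ^ n := by
    intro n
    set s : ℝ := Real.sqrt (1/2) with hsdef
    have hs2 : s^2 = 1/2 := Real.sq_sqrt (by norm_num)
    have k1 : ε * (1/2:ℝ)^(n+1) * ‖z (n+1) - z n‖^2 ≤ ε * (1/4:ℝ)^n + ε * (1/4:ℝ)^(n+1) := by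
      have a1 : m n ≤ hs n (z (n+1)) := hm_le n (z (n+1))
      have a2 : hs (n+1) (z (n+1)) = hs n (z (n+1)) + ε * (1/2:ℝ)^(n+1) * ‖z (n+1) - z n‖^2 :=
        hsucc n (z (n+1))
      have a3 : hs (n+1) (z (n+1)) ≤ m (n+1) + ε * (1/4:ℝ)^(n+1) := hzspec (n+1)
      have a4 : m (n+1) ≤ hs (n+1) (z n) := hm_le (n+1) (z n)
      have a5 : hs (n+1) (z n) = hs n (z n) := by rw [hsucc n]; simp
      have a6 : hs n (z n) ≤ m n + ε * (1/4:ℝ)^n := hzspec n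
      linarith
    have hpos : (0:ℝ) < ε * (1/2:ℝ)^(n+1) := by positivity
    have k2 : ‖z (n+1) - z n‖^2 ≤ 4 * (1/2:ℝ)^n := by
      refine le_of_mul_le_mul_left ?_ hpos
      refine k1.trans ?_
      have h4 : (1/4:ℝ)^n = (1/2:ℝ)^n * (1/2:ℝ)^n := by rw [← mul_pow]; norm_num
      have hA : (0:ℝ) ≤ ε * ((1/2:ℝ)^n * (1/2:ℝ)^n) := by positivity
      rw [pow_succ, pow_succ, h4]
      nlinarith [hA]
    have h2 : ((2:ℝ) * s^n)^2 = 4 * (1/2:ℝ)^n := by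
      rw [mul_pow, ← pow_mul, mul_comm n 2, pow_mul, hs2]
      norm_num
    calc ‖z (n+1) - z n‖ = Real.sqrt (‖z (n+1) - z n‖^2) :=
          (Real.sqrt_sq (norm_nonneg _)).symm
      _ ≤ Real.sqrt (((2:ℝ) * s^n)^2) := Real.sqrt_le_sqrt (by rw [h2]; exact k2)
      _ = 2 * s^n := Real.sqrt_sq (by positivity)
  set s : ℝ := Real.sqrt (1/2) with hsdef
  have hs2 : s^2 = 1/2 := Real.sq_sqrt (by norm_num)
  have hs_nonneg : 0 ≤ s := Real.sqrt_nonneg _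
  have hs_le : s ≤ 5/7 := by
    have : s ≤ Real.sqrt ((5/7)^2) := Real.sqrt_le_sqrt (by norm_num)
    rwa [Real.sqrt_sq (by norm_num)] at this
  have hs_lt1 : s < 1 := lt_of_le_of_lt hs_le (by norm_num)
  have hdist : ∀ n, dist (z n) (z (n+1)) ≤ 2 * s^n := fun n => by
    rw [dist_eq_norm, norm_sub_rev]; exact hd n
  have hcau : CauchySeq z := cauchySeq_of_le_geometric s 2 hs_lt1 hdist
  obtain ⟨p, hp⟩ := cauchySeq_tendsto_of_complete hcau
  have hzp : ∀ n, ‖z n - p‖ ≤ 7 * s^n := by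
    intro n
    have hgeom := dist_le_of_le_geometric_of_tendsto s 2 hs_lt1 hdist hp n
    rw [dist_eq_norm] at hgeom
    have h1s : (2:ℝ)/(1-s) ≤ 7 := by
      rw [div_le_iff₀ (by linarith)]
      linarith
    calc ‖z n - p‖ ≤ 2 * s^n / (1-s) := hgeom
      _ = (2/(1-s)) * s^n := by ring
      _ ≤ 7 * s^n := mul_le_mul_of_nonneg_right h1s (by positivity)
  have hzz : ∀ k j, k ≤ j → ‖z k - z j‖ ≤ 14 * s^k := by
    intro k j hkj
    have h1 : ‖z k - z j‖ ≤ ‖z k - p‖ + ‖z j - p‖ := by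
      calc ‖z k - z j‖ = ‖(z k - p) + (p - z j)‖ := by rw [sub_add_sub_cancel]
        _ ≤ ‖z k - p‖ + ‖p - z j‖ := norm_add_le _ _
        _ = ‖z k - p‖ + ‖z j - p‖ := by rw [norm_sub_rev p]
    have h2 : s^j ≤ s^k := pow_le_pow_of_le_one hs_nonneg hs_lt1.le hkj
    have h3 := hzp k
    have h4 := hzp j
    nlinarith
  -- weight series
  have hgeo : Summable (fun j : ℕ => (1/2:ℝ)^(j+1)) := by
    simpa [pow_succ] using (summable_geometric_of_lt_one (by norm_num) (by norm_num :
      (1/2:ℝ) < 1)).mul_right (1/2:ℝ)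
  have hgeoC : ∀ C : ℝ, Summable (fun j : ℕ => ε * (1/2:ℝ)^(j+1) * C) :=
    fun C => (hgeo.mul_left ε).mul_right C
  have hν1 : ∑' j : ℕ, (1/2:ℝ)^(j+1) = 1 := by
    calc ∑' j : ℕ, (1/2:ℝ)^(j+1) = ∑' j : ℕ, (1/2:ℝ)^j * (1/2) := by
          simp [pow_succ]
      _ = (1 - (1/2:ℝ))⁻¹ * (1/2) := by
          rw [tsum_mul_right, tsum_geometric_of_lt_one (by norm_num) (by norm_num)]
      _ = 1 := by norm_num
  have hzbound : ∀ j, ‖z j‖ ≤ ‖z 0‖ + 14 := by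
    intro j
    have := hzz 0 j (Nat.zero_le j)
    rw [pow_zero, mul_one] at this
    calc ‖z j‖ = ‖z 0 - (z 0 - z j)‖ := by rw [sub_sub_cancel]
      _ ≤ ‖z 0‖ + ‖z 0 - z j‖ := norm_sub_le _ _
      _ ≤ ‖z 0‖ + 14 := by linarith
  have hsum_c : Summable (fun j : ℕ => ((1/2:ℝ)^(j+1)) • z j) := by
    refine Summable.of_norm_bounded (g := fun j => (1/2:ℝ)^(j+1) * (‖z 0‖ + 14))
      (hgeo.mul_right _) (fun j => ?_)
    rw [norm_smul, Real.norm_eq_abs, abs_of_nonneg (by positivity)]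
    exact mul_le_mul_of_nonneg_left (hzbound j) (by positivity)
  set c : E := ∑' j : ℕ, ((1/2:ℝ)^(j+1)) • z j with hcdef
  -- the total perturbation
  set Q : E → ℝ := fun x => ∑' j : ℕ, ε * (1/2:ℝ)^(j+1) * ‖x - z j‖^2 with hQdef
  have hQsummable : ∀ x, Summable (fun j : ℕ => ε * (1/2:ℝ)^(j+1) * ‖x - z j‖^2) := by
    intro x
    refine Summable.of_nonneg_of_le (fun j => by positivity)
      (fun j => ?_) (hgeoC ((‖x‖ + (‖z 0‖ + 14))^2))
    have h1 : ‖x - z j‖ ≤ ‖x‖ + (‖z 0‖ + 14) := by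
      calc ‖x - z j‖ ≤ ‖x‖ + ‖z j‖ := norm_sub_le _ _
        _ ≤ ‖x‖ + (‖z 0‖ + 14) := by linarith [hzbound j]
    have h2 : ‖x - z j‖^2 ≤ (‖x‖ + (‖z 0‖ + 14))^2 := pow_le_pow_left₀ (norm_nonneg _) h1 2
    exact mul_le_mul_of_nonneg_left h2 (by positivity)
  set T : ℝ := ∑' j : ℕ, ε * (1/2:ℝ)^(j+1) * ‖z j‖^2 with hTdef
  have hT_summable : Summable (fun j : ℕ => ε * (1/2:ℝ)^(j+1) * ‖z j‖^2) := by
    refine Summable.of_nonneg_of_le (fun j => by positivity) (fun j => ?_)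
      (hgeoC ((‖z 0‖ + 14)^2))
    have h2 : ‖z j‖^2 ≤ (‖z 0‖ + 14)^2 := pow_le_pow_left₀ (norm_nonneg _) (hzbound j) 2
    exact mul_le_mul_of_nonneg_left h2 (by positivity)
  have hQid : ∀ x, Q x = ε * ‖x - c‖^2 + (T - ε * ‖c‖^2) := by
    intro x
    have hA : Summable (fun j : ℕ => ε * (1/2:ℝ)^(j+1) * ‖x‖^2) := hgeoC (‖x‖^2)
    have hB0 : Summable (fun j : ℕ => (inner ℝ x (((1/2:ℝ)^(j+1)) • z j) : ℝ)) :=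
      hsum_c.mapL (innerSL ℝ x)
    have hB : Summable (fun j : ℕ => (2*ε) * (inner ℝ x (((1/2:ℝ)^(j+1)) • z j) : ℝ)) :=
      hB0.mul_left _
    have e1 : ∀ j : ℕ, ε * (1/2:ℝ)^(j+1) * ‖x - z j‖^2
        = (ε * (1/2:ℝ)^(j+1) * ‖x‖^2 - (2*ε) * (inner ℝ x (((1/2:ℝ)^(j+1)) • z j) : ℝ))
          + ε * (1/2:ℝ)^(j+1) * ‖z j‖^2 := by
      intro j
      rw [norm_sub_sq_real, real_inner_smul_right]
      ring
    have hQx : Q x = (∑' j : ℕ, (ε * (1/2:ℝ)^(j+1) * ‖x‖^2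
        - (2*ε) * (inner ℝ x (((1/2:ℝ)^(j+1)) • z j) : ℝ))) + T := by
      calc Q x = ∑' j : ℕ, ε * (1/2:ℝ)^(j+1) * ‖x - z j‖^2 := rfl
        _ = ∑' j : ℕ, ((ε * (1/2:ℝ)^(j+1) * ‖x‖^2
              - (2*ε) * (inner ℝ x (((1/2:ℝ)^(j+1)) • z j) : ℝ))
              + ε * (1/2:ℝ)^(j+1) * ‖z j‖^2) := tsum_congr e1
        _ = (∑' j : ℕ, (ε * (1/2:ℝ)^(j+1) * ‖x‖^2
              - (2*ε) * (inner ℝ x (((1/2:ℝ)^(j+1)) • z j) : ℝ)))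
              + ∑' j : ℕ, ε * (1/2:ℝ)^(j+1) * ‖z j‖^2 := Summable.tsum_add (hA.sub hB) hT_summable
        _ = _ := rfl
    rw [hQx, Summable.tsum_sub hA hB]
    have eA : ∑' j : ℕ, ε * (1/2:ℝ)^(j+1) * ‖x‖^2 = ε * ‖x‖^2 := by
      calc ∑' j : ℕ, ε * (1/2:ℝ)^(j+1) * ‖x‖^2
          = ∑' j : ℕ, (ε * ‖x‖^2) * (1/2:ℝ)^(j+1) := tsum_congr (fun j => by ring)
        _ = (ε * ‖x‖^2) * ∑' j : ℕ, (1/2:ℝ)^(j+1) := tsum_mul_left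
        _ = ε * ‖x‖^2 := by rw [hν1]; ring
    have eB : ∑' j : ℕ, (2*ε) * (inner ℝ x (((1/2:ℝ)^(j+1)) • z j) : ℝ)
        = (2*ε) * (inner ℝ x c : ℝ) := by
      rw [tsum_mul_left]
      congr 1
      exact ((innerSL ℝ x).map_tsum hsum_c).symm
    rw [eA, eB]
    have expand : ‖x - c‖^2 = ‖x‖^2 - 2 * (inner ℝ x c : ℝ) + ‖c‖^2 := norm_sub_sq_real x c
    rw [expand]
    ring
  have hQcont : Continuous Q := by
    have : Q = fun x => ε * ‖x - c‖^2 + (T - ε * ‖c‖^2) := funext hQid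
    rw [this]
    exact (continuous_const.mul ((continuous_id.sub continuous_const).norm.pow 2)).add
      continuous_const
  have hWlsc : LowerSemicontinuous (fun x => h x + Q x) :=
    hlsc.add hQcont.lowerSemicontinuous
  have hhsQ : ∀ k x, hs k x ≤ h x + Q x := by
    intro k x
    rw [hs_eq k x]
    have := Summable.sum_le_tsum (Finset.range k) (fun j _ => by positivity : ∀ j ∉ Finset.range k,
      (0:ℝ) ≤ ε * (1/2:ℝ)^(j+1) * ‖x - z j‖^2) (hQsummable x)
    have hQx : Q x = ∑' j : ℕ, ε * (1/2:ℝ)^(j+1) * ‖x - z j‖^2 := rfl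
    linarith
  have hQz : ∀ k, h (z k) + Q (z k) ≤ hs k (z k) + 196 * ε * (1/2:ℝ)^k := by
    intro k
    have hsplit := Summable.sum_add_tsum_nat_add k (hQsummable (z k))
    have htail : (∑' j : ℕ, ε * (1/2:ℝ)^((j+k)+1) * ‖z k - z (j+k)‖^2)
        ≤ 196 * ε * (1/2:ℝ)^k := by
      have hbound : ∀ j : ℕ, ε * (1/2:ℝ)^((j+k)+1) * ‖z k - z (j+k)‖^2
          ≤ (ε * (1/2:ℝ)^(j+1)) * (196 * (1/2:ℝ)^k) := by
        intro j
        have h1 : ‖z k - z (j+k)‖ ≤ 14 * s^k := hzz k (j+k) (Nat.le_add_left k j)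
        have h2 : ‖z k - z (j+k)‖^2 ≤ (14 * s^k)^2 := pow_le_pow_left₀ (norm_nonneg _) h1 2
        have h3 : (14 * s^k)^2 = 196 * (1/2:ℝ)^k := by
          rw [mul_pow, ← pow_mul, mul_comm k 2, pow_mul, hs2]
          norm_num
        have h5 : ‖z k - z (j+k)‖^2 ≤ 196 * (1/2:ℝ)^k := h3 ▸ h2
        have h6 : (0:ℝ) ≤ ‖z k - z (j+k)‖^2 := by positivity
        have h4 : ε * (1/2:ℝ)^((j+k)+1) ≤ ε * (1/2:ℝ)^(j+1) :=
          mul_le_mul_of_nonneg_left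
            (pow_le_pow_of_le_one (by norm_num) (by norm_num) (by omega)) hε.le
        exact mul_le_mul h4 h5 h6 (by positivity)
      have hsumtail : Summable (fun j : ℕ => ε * (1/2:ℝ)^((j+k)+1) * ‖z k - z (j+k)‖^2) :=
        (summable_nat_add_iff k).mpr (hQsummable (z k))
      calc (∑' j : ℕ, ε * (1/2:ℝ)^((j+k)+1) * ‖z k - z (j+k)‖^2)
          ≤ ∑' j : ℕ, (ε * (1/2:ℝ)^(j+1)) * (196 * (1/2:ℝ)^k) :=
            Summable.tsum_le_tsum hbound hsumtail (hgeoC _)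
        _ = (∑' j : ℕ, (1/2:ℝ)^(j+1)) * (ε * (196 * (1/2:ℝ)^k)) := by
            rw [← tsum_mul_right]
            exact tsum_congr (fun j => by ring)
        _ = 196 * ε * (1/2:ℝ)^k := by rw [hν1]; ring
    have hQzk : Q (z k) = (∑ j ∈ Finset.range k, ε * (1/2:ℝ)^(j+1) * ‖z k - z j‖^2)
        + ∑' j : ℕ, ε * (1/2:ℝ)^((j+k)+1) * ‖z k - z (j+k)‖^2 := hsplit.symm
    rw [hQzk, hs_eq k (z k)]
    linarith
  -- minimality at p
  have hmin : ∀ x, h p + Q p ≤ h x + Q x := by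
    intro x
    by_contra hcon
    push_neg at hcon
    have hdpos : 0 < (h p + Q p - (h x + Q x))/2 := by linarith
    set d : ℝ := (h p + Q p - (h x + Q x))/2 with hddef
    have ev1 : ∀ᶠ k in atTop, h p + Q p - d < h (z k) + Q (z k) :=
      hp.eventually (hWlsc p (h p + Q p - d) (show h p + Q p - d < h p + Q p by linarith))
    have ev2 : ∀ᶠ k in atTop, 196*ε*(1/2:ℝ)^k + ε*(1/4:ℝ)^k < d := by
      have hlim : Tendsto (fun k : ℕ => 196*ε*(1/2:ℝ)^k + ε*(1/4:ℝ)^k) atTop (𝓝 0) := by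
        have t1 : Tendsto (fun k : ℕ => (1/2:ℝ)^k) atTop (𝓝 0) :=
          tendsto_pow_atTop_nhds_zero_of_lt_one (by norm_num) (by norm_num)
        have t2 : Tendsto (fun k : ℕ => (1/4:ℝ)^k) atTop (𝓝 0) :=
          tendsto_pow_atTop_nhds_zero_of_lt_one (by norm_num) (by norm_num)
        have := (t1.const_mul (196*ε)).add (t2.const_mul ε)
        simpa using this
      exact hlim.eventually_lt_const hdpos
    obtain ⟨k, h1, h2⟩ := (ev1.and ev2).exists
    have c1 : hs k x ≤ h x + Q x := hhsQ k x
    have c2 : m k ≤ hs k x := hm_le k x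
    have c3 : hs k (z k) ≤ m k + ε * (1/4:ℝ)^k := hzspec k
    have c4 : h (z k) + Q (z k) ≤ hs k (z k) + 196 * ε * (1/2:ℝ)^k := hQz k
    linarith
  -- conclusion
  refine ⟨c, p, ?_, ?_, ?_⟩
  · -- ‖p - c‖ ≤ 30
    have hsum_c0 : Summable (fun j : ℕ => ((1/2:ℝ)^(j+1)) • z 0) := hgeo.smul_const _
    have hcz0 : c - z 0 = ∑' j : ℕ, ((1/2:ℝ)^(j+1)) • (z j - z 0) := by
      have e0 : (∑' j : ℕ, ((1/2:ℝ)^(j+1)) • z 0) = z 0 := by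
        rw [hgeo.tsum_smul_const, hν1, one_smul]
      calc c - z 0 = (∑' j : ℕ, ((1/2:ℝ)^(j+1)) • z j) - ∑' j : ℕ, ((1/2:ℝ)^(j+1)) • z 0 := by
            rw [e0]
        _ = ∑' j : ℕ, (((1/2:ℝ)^(j+1)) • z j - ((1/2:ℝ)^(j+1)) • z 0) :=
            (Summable.tsum_sub hsum_c hsum_c0).symm
        _ = ∑' j : ℕ, ((1/2:ℝ)^(j+1)) • (z j - z 0) := tsum_congr (fun j => (smul_sub _ _ _).symm)
    have hc0 : ‖c - z 0‖ ≤ 14 := by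
      rw [hcz0]
      have hhs14 : HasSum (fun j : ℕ => (1/2:ℝ)^(j+1) * 14) 14 := by
        have := (hgeo.hasSum.mul_right (14:ℝ))
        rwa [hν1, one_mul] at this
      refine tsum_of_norm_bounded hhs14 (fun j => ?_)
      rw [norm_smul, Real.norm_eq_abs, abs_of_nonneg (by positivity)]
      have hn : ‖z j - z 0‖ ≤ 14 := by
        have := hzz 0 j (Nat.zero_le j)
        rw [pow_zero, mul_one] at this
        rwa [norm_sub_rev]
      exact mul_le_mul_of_nonneg_left hn (by positivity)
    have hp0 : ‖p - z 0‖ ≤ 7 := by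
      have := hzp 0
      rw [pow_zero, mul_one] at this
      rwa [norm_sub_rev]
    calc ‖p - c‖ = ‖(p - z 0) + (z 0 - c)‖ := by rw [sub_add_sub_cancel]
      _ ≤ ‖p - z 0‖ + ‖z 0 - c‖ := norm_add_le _ _
      _ = ‖p - z 0‖ + ‖c - z 0‖ := by rw [norm_sub_rev (z 0)]
      _ ≤ 7 + 14 := add_le_add hp0 hc0
      _ ≤ 30 := by norm_num
  · -- variational inequality
    intro x
    have h1 := hmin x
    have h2 := hQid p
    have h3 := hQid x
    linarith
  · -- near optimality
    intro x
    have hQp : 0 ≤ Q p := tsum_nonneg (fun j => by positivity)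
    have hQz0 : Q (z 0) ≤ 196 * ε := by
      have hq := hQz 0
      rw [pow_zero, mul_one] at hq
      have h0 : hs 0 (z 0) = h (z 0) := by rw [hs0]
      linarith
    have h5 : h (z 0) ≤ m 0 + ε := by
      have := hzspec 0
      rwa [pow_zero, mul_one, hs0] at this
    have h6 : m 0 ≤ h x := by
      have := hm_le 0 x
      rwa [hs0] at this
    have h7 := hmin (z 0)
    linarith
end BP

set_option maxHeartbeats 1000000 in
set_option synthInstance.maxHeartbeats 400000 in
/-- Maximum principle for Hamilton–Jacobi equations in a real Hilbert space: if `u` is a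
bounded viscosity subsolution of `u + F(x, du) = f` and `v` is a bounded viscosity
supersolution of `v + F(x, dv) = g`, with `f, g` bounded uniformly continuous and `F`
uniformly continuous, then `v − u ≥ inf (g − f)`. -/
theorem hamilton_jacobi_maximum_principle
    {H : Type*} [NormedAddCommGroup H] [InnerProductSpace ℝ H] [CompleteSpace H]
    (f g : H → ℝ)
    (hfb : ∃ C : ℝ, ∀ x, |f x| ≤ C) (hfu : UniformContinuous f)
    (hgb : ∃ C : ℝ, ∀ x, |g x| ≤ C) (hgu : UniformContinuous g)
    (F : H → (H →L[ℝ] ℝ) → ℝ)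
    (hF : ∀ ε > (0 : ℝ), ∃ δ > (0 : ℝ), ∀ (x y : H) (ζ ξ : H →L[ℝ] ℝ),
      ‖x - y‖ ≤ δ → ‖ζ - ξ‖ ≤ δ → |F x ζ - F y ξ| ≤ ε)
    (u : H → ℝ) (hu : UpperSemicontinuous u) (hub : ∃ C : ℝ, ∀ x, |u x| ≤ C)
    (husub : ∀ x : H, ∀ ζ ∈ superdiffR u x, u x + F x ζ ≤ f x)
    (v : H → ℝ) (hv : LowerSemicontinuous v) (hvb : ∃ C : ℝ, ∀ x, |v x| ≤ C)
    (hvsup : ∀ x : H, ∀ ξ ∈ subdiffR v x, g x ≤ v x + F x ξ) :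
    ∀ x : H, (⨅ z : H, (g z - f z)) ≤ v x - u x := by
  intro x₀
  obtain ⟨Cu, hCu⟩ := hub
  obtain ⟨Cv, hCv⟩ := hvb
  obtain ⟨Cf, hCf⟩ := hfb
  obtain ⟨Cg, hCg⟩ := hgb
  have hCu0 : 0 ≤ Cu := (abs_nonneg _).trans (hCu x₀)
  have hCv0 : 0 ≤ Cv := (abs_nonneg _).trans (hCv x₀)
  have hbddI : BddBelow (Set.range fun z : H => g z - f z) := by
    refine ⟨-(Cg + Cf), fun r ⟨w, hw⟩ => ?_⟩
    have h1 := abs_le.mp (hCg w)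
    have h2 := abs_le.mp (hCf w)
    rw [← hw]; dsimp only; linarith [h1.1, h2.2]
  refine le_of_forall_pos_le_add (fun ε hε => ?_)
  obtain ⟨δ, hδ, hFδ⟩ := hF (ε/3) (by positivity)
  obtain ⟨δg, hδg, hgδ⟩ := Metric.uniformContinuous_iff.mp hgu (ε/3) (by positivity)
  set ε₀ : ℝ := min (min (δ/240) (ε/600)) 1 with hε₀def
  have hε₀pos : 0 < ε₀ := lt_min (lt_min (by positivity) (by positivity)) one_pos
  have hε₀δ : ε₀ ≤ δ/240 := (min_le_left _ _).trans (min_le_left _ _)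
  have hε₀ε : ε₀ ≤ ε/600 := (min_le_left _ _).trans (min_le_right _ _)
  have hε₀1 : ε₀ ≤ 1 := min_le_right _ _
  set η : ℝ := min δ (δg/2) with hηdef
  have hη : 0 < η := lt_min hδ (by positivity)
  set K : ℝ := 2*Cu + 2*Cv + 201 with hKdef
  have hK : 0 < K := by positivity
  set α : ℝ := K/η^2 + 1 with hαdef
  have hα : 0 < α := by positivity
  -- the doubled-variable functional on the L² product
  set W : (WithLp 2 (H × H)) → ℝ :=
    fun q => v q.snd + -u q.fst + α * ‖q.fst - q.snd‖^2 with hWdef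
  have hfstc : Continuous (fun q : WithLp 2 (H × H) => q.fst) :=
    continuous_fst.comp (WithLp.prodContinuousLinearEquiv 2 ℝ H H).continuous
  have hsndc : Continuous (fun q : WithLp 2 (H × H) => q.snd) :=
    continuous_snd.comp (WithLp.prodContinuousLinearEquiv 2 ℝ H H).continuous
  have hWlsc : LowerSemicontinuous W := by
    have h1 : LowerSemicontinuous (fun q : WithLp 2 (H × H) => v q.snd) := by
      intro q y hy
      exact (hsndc.tendsto q).eventually (hv q.snd y hy)
    have h2 : LowerSemicontinuous (fun q : WithLp 2 (H × H) => -u q.fst) := by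
      intro q y hy
      have hy' : y < -u q.fst := hy
      have h3 : u q.fst < -y := by linarith
      exact ((hfstc.tendsto q).eventually (hu q.fst (-y) h3)).mono (fun w hw => by
        dsimp only at hw ⊢; linarith)
    have h3 : Continuous (fun q : WithLp 2 (H × H) => α * ‖q.fst - q.snd‖^2) :=
      continuous_const.mul (((hfstc.sub hsndc).norm).pow 2)
    exact (h1.add h2).add h3.lowerSemicontinuous
  have hBW : ∀ q, -Cv - Cu ≤ W q := by
    intro q
    have h1 := abs_le.mp (hCv q.snd)
    have h2 := abs_le.mp (hCu q.fst)
    have h3 : 0 ≤ α * ‖q.fst - q.snd‖^2 := by positivity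
    simp only [hWdef]
    linarith [h1.1, h2.2]
  obtain ⟨c, p, hpc, hvar, hnear⟩ := smoothVP W hWlsc hBW hε₀pos
  -- component estimates
  have hpcsq : ‖p - c‖^2 = ‖p.fst - c.fst‖^2 + ‖p.snd - c.snd‖^2 := by
    rw [WithLp.prod_norm_sq_eq_of_L2, WithLp.sub_fst, WithLp.sub_snd]
  have hpc900 : ‖p - c‖^2 ≤ 900 := by
    calc ‖p - c‖^2 ≤ 30^2 := pow_le_pow_left₀ (norm_nonneg _) hpc 2
      _ = 900 := by norm_num
  have h30a : ‖p.fst - c.fst‖ ≤ 30 := by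
    have h1 : ‖p.fst - c.fst‖^2 ≤ 900 := by
      have := sq_nonneg ‖p.snd - c.snd‖
      nlinarith [hpcsq, hpc900]
    calc ‖p.fst - c.fst‖ = Real.sqrt (‖p.fst - c.fst‖^2) := (Real.sqrt_sq (norm_nonneg _)).symm
      _ ≤ Real.sqrt 900 := Real.sqrt_le_sqrt h1
      _ = 30 := by rw [show (900:ℝ) = 30^2 by norm_num, Real.sqrt_sq (by norm_num)]
  have h30b : ‖p.snd - c.snd‖ ≤ 30 := by
    have h1 : ‖p.snd - c.snd‖^2 ≤ 900 := by
      have := sq_nonneg ‖p.fst - c.fst‖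
      nlinarith [hpcsq, hpc900]
    calc ‖p.snd - c.snd‖ = Real.sqrt (‖p.snd - c.snd‖^2) := (Real.sqrt_sq (norm_nonneg _)).symm
      _ ≤ Real.sqrt 900 := Real.sqrt_le_sqrt h1
      _ = 30 := by rw [show (900:ℝ) = 30^2 by norm_num, Real.sqrt_sq (by norm_num)]
  -- embedding points
  set e0 : WithLp 2 (H × H) := (WithLp.equiv 2 (H × H)).symm (x₀, x₀) with he0def
  have he0f : e0.fst = x₀ := rfl
  have he0s : e0.snd = x₀ := rfl
  -- the basic optimality inequality
  have hstar : v p.snd + -u p.fst + α * ‖p.fst - p.snd‖^2 ≤ v x₀ + -u x₀ + 200 * ε₀ := by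
    have := hnear e0
    simp only [hWdef, he0f, he0s, sub_self, norm_zero] at this
    calc v p.snd + -u p.fst + α * ‖p.fst - p.snd‖^2 = W p := rfl
      _ ≤ W e0 + 200 * ε₀ := hnear e0
      _ = v x₀ + -u x₀ + α * ‖(x₀:H) - x₀‖^2 + 200 * ε₀ := rfl
      _ = v x₀ + -u x₀ + 200 * ε₀ := by rw [sub_self, norm_zero]; ring
  have hαbd : α * ‖p.fst - p.snd‖^2 ≤ K := by
    have h1 := abs_le.mp (hCv p.snd)
    have h2 := abs_le.mp (hCu p.fst)
    have h3 := abs_le.mp (hCv x₀)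
    have h4 := abs_le.mp (hCu x₀)
    have : (200:ℝ) * ε₀ ≤ 200 := by linarith
    simp only [hKdef]
    linarith [hstar, h1.2, h2.1, h3.2, h4.2]
  have hxy : ‖p.fst - p.snd‖ ≤ η := by
    have hsq : ‖p.fst - p.snd‖^2 ≤ η^2 := by
      have hαη : K ≤ α * η^2 := by
        have : α * η^2 = K + η^2 := by
          rw [hαdef]
          field_simp
        nlinarith [sq_nonneg η]
      have := le_of_mul_le_mul_left (hαbd.trans hαη) hα
      exact this
    calc ‖p.fst - p.snd‖ = Real.sqrt (‖p.fst - p.snd‖^2) := (Real.sqrt_sq (norm_nonneg _)).symm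
      _ ≤ Real.sqrt (η^2) := Real.sqrt_le_sqrt hsq
      _ = η := Real.sqrt_sq hη.le
  -- first test function (for u at p.fst)
  set φ₁ : H → ℝ := fun x => α * ‖x - p.snd‖^2 + ε₀ * ‖x - c.fst‖^2 with hφ₁def
  have hmax1 : ∀ x, u x - φ₁ x ≤ u p.fst - φ₁ p.fst := by
    intro x
    have h1 := hvar ((WithLp.equiv 2 (H × H)).symm (x, p.snd))
    have hcomp : ‖(WithLp.equiv 2 (H × H)).symm (x, p.snd) - c‖^2
        = ‖x - c.fst‖^2 + ‖p.snd - c.snd‖^2 := by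
      rw [WithLp.prod_norm_sq_eq_of_L2, WithLp.sub_fst, WithLp.sub_snd]
      rfl
    have hWq : W ((WithLp.equiv 2 (H × H)).symm (x, p.snd))
        = v p.snd + -u x + α * ‖x - p.snd‖^2 := rfl
    have hWp : W p = v p.snd + -u p.fst + α * ‖p.fst - p.snd‖^2 := rfl
    rw [hWq, hWp, hcomp, hpcsq] at h1
    simp only [hφ₁def]
    linarith
  have hφ₁cd : ContDiff ℝ 1 φ₁ := by
    refine ContDiff.add ?_ ?_
    · exact contDiff_const.mul ((contDiff_norm_sq ℝ).comp (contDiff_id.sub contDiff_const))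
    · exact contDiff_const.mul ((contDiff_norm_sq ℝ).comp (contDiff_id.sub contDiff_const))
  have hD1 : HasFDerivAt φ₁
      (α • (2 • (innerSL ℝ (p.fst - p.snd))) + ε₀ • (2 • (innerSL ℝ (p.fst - c.fst))))
      p.fst := by
    have d1 : HasFDerivAt (fun x : H => ‖x - p.snd‖^2) (2 • (innerSL ℝ (p.fst - p.snd)))
        p.fst := by
      have := ((hasFDerivAt_id (𝕜 := ℝ) p.fst).sub_const p.snd).norm_sq
      simpa using this
    have d2 : HasFDerivAt (fun x : H => ‖x - c.fst‖^2) (2 • (innerSL ℝ (p.fst - c.fst)))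
        p.fst := by
      have := ((hasFDerivAt_id (𝕜 := ℝ) p.fst).sub_const c.fst).norm_sq
      simpa using this
    exact (d1.const_mul α).add (d2.const_mul ε₀)
  set ζ : H →L[ℝ] ℝ := fderiv ℝ φ₁ p.fst with hζdef
  have hζ : ζ = α • (2 • (innerSL ℝ (p.fst - p.snd))) + ε₀ • (2 • (innerSL ℝ (p.fst - c.fst))) :=
    hD1.fderiv
  have hζmem : ζ ∈ superdiffR u p.fst :=
    ⟨φ₁, hφ₁cd, rfl, Filter.Eventually.of_forall hmax1⟩
  have hineq1 : u p.fst + F p.fst ζ ≤ f p.fst := husub p.fst ζ hζmem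
  -- second test function (for v at p.snd)
  set φ₂ : H → ℝ := fun y => -(α * ‖p.fst - y‖^2) - ε₀ * ‖y - c.snd‖^2 with hφ₂def
  have hmin2 : ∀ y, v p.snd - φ₂ p.snd ≤ v y - φ₂ y := by
    intro y
    have h1 := hvar ((WithLp.equiv 2 (H × H)).symm (p.fst, y))
    have hcomp : ‖(WithLp.equiv 2 (H × H)).symm (p.fst, y) - c‖^2
        = ‖p.fst - c.fst‖^2 + ‖y - c.snd‖^2 := by
      rw [WithLp.prod_norm_sq_eq_of_L2, WithLp.sub_fst, WithLp.sub_snd]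
      rfl
    have hWq : W ((WithLp.equiv 2 (H × H)).symm (p.fst, y))
        = v y + -u p.fst + α * ‖p.fst - y‖^2 := rfl
    have hWp : W p = v p.snd + -u p.fst + α * ‖p.fst - p.snd‖^2 := rfl
    rw [hWq, hWp, hcomp, hpcsq] at h1
    simp only [hφ₂def]
    linarith
  have hφ₂cd : ContDiff ℝ 1 φ₂ := by
    refine ContDiff.sub ?_ ?_
    · exact (contDiff_const.mul ((contDiff_norm_sq ℝ).comp (contDiff_const.sub contDiff_id))).neg
    · exact contDiff_const.mul ((contDiff_norm_sq ℝ).comp (contDiff_id.sub contDiff_const))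
  have hD2 : HasFDerivAt φ₂
      (-(α • (2 • ((innerSL ℝ (p.fst - p.snd)).comp (-(ContinuousLinearMap.id ℝ H)))))
        - ε₀ • (2 • (innerSL ℝ (p.snd - c.snd)))) p.snd := by
    have d3 : HasFDerivAt (fun y : H => ‖p.fst - y‖^2)
        (2 • ((innerSL ℝ (p.fst - p.snd)).comp (-(ContinuousLinearMap.id ℝ H)))) p.snd := by
      have := ((hasFDerivAt_id (𝕜 := ℝ) p.snd).const_sub p.fst).norm_sq
      simpa using this
    have d4 : HasFDerivAt (fun y : H => ‖y - c.snd‖^2) (2 • (innerSL ℝ (p.snd - c.snd)))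
        p.snd := by
      have := ((hasFDerivAt_id (𝕜 := ℝ) p.snd).sub_const c.snd).norm_sq
      simpa using this
    exact ((d3.const_mul α).neg).sub (d4.const_mul ε₀)
  set ξ : H →L[ℝ] ℝ := fderiv ℝ φ₂ p.snd with hξdef
  have hξ : ξ = -(α • (2 • ((innerSL ℝ (p.fst - p.snd)).comp (-(ContinuousLinearMap.id ℝ H)))))
      - ε₀ • (2 • (innerSL ℝ (p.snd - c.snd))) := hD2.fderiv
  have hξmem : ξ ∈ subdiffR v p.snd :=
    ⟨φ₂, hφ₂cd, rfl, Filter.Eventually.of_forall hmin2⟩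
  have hineq2 : g p.snd ≤ v p.snd + F p.snd ξ := hvsup p.snd ξ hξmem
  -- gradient difference estimate
  have hdiffζξ : ζ - ξ = innerSL ℝ ((2*ε₀) • (p.fst - c.fst))
      + innerSL ℝ ((2*ε₀) • (p.snd - c.snd)) := by
    rw [hζ, hξ]
    ext w
    simp only [ContinuousLinearMap.add_apply, ContinuousLinearMap.sub_apply,
      ContinuousLinearMap.neg_apply, ContinuousLinearMap.smul_apply,
      ContinuousLinearMap.comp_apply, ContinuousLinearMap.id_apply, innerSL_apply_apply,
      smul_eq_mul, nsmul_eq_mul, Nat.cast_ofNat, inner_neg_right, real_inner_smul_left]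
    ring
  have hζξnorm : ‖ζ - ξ‖ ≤ δ := by
    rw [hdiffζξ]
    have hn1 : ‖innerSL ℝ ((2*ε₀) • (p.fst - c.fst))‖ ≤ (2*ε₀) * 30 := by
      rw [innerSL_apply_norm, norm_smul, Real.norm_eq_abs, abs_of_nonneg (by positivity)]
      exact mul_le_mul_of_nonneg_left h30a (by positivity)
    have hn2 : ‖innerSL ℝ ((2*ε₀) • (p.snd - c.snd))‖ ≤ (2*ε₀) * 30 := by
      rw [innerSL_apply_norm, norm_smul, Real.norm_eq_abs, abs_of_nonneg (by positivity)]
      exact mul_le_mul_of_nonneg_left h30b (by positivity)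
    calc ‖innerSL ℝ ((2*ε₀) • (p.fst - c.fst)) + innerSL ℝ ((2*ε₀) • (p.snd - c.snd))‖
        ≤ ‖innerSL ℝ ((2*ε₀) • (p.fst - c.fst))‖ + ‖innerSL ℝ ((2*ε₀) • (p.snd - c.snd))‖ :=
          norm_add_le _ _
      _ ≤ (2*ε₀) * 30 + (2*ε₀) * 30 := add_le_add hn1 hn2
      _ = 120 * ε₀ := by ring
      _ ≤ δ := by linarith [hε₀δ]
  -- uniform continuity estimates
  have hFdiff : |F p.snd ξ - F p.fst ζ| ≤ ε/3 := by
    refine hFδ p.snd p.fst ξ ζ ?_ ?_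
    · rw [norm_sub_rev]
      exact hxy.trans (min_le_left _ _)
    · rw [norm_sub_rev]
      exact hζξnorm
  have hgdiff : |g p.fst - g p.snd| ≤ ε/3 := by
    have hd : dist p.fst p.snd < δg := by
      rw [dist_eq_norm]
      have : η ≤ δg/2 := min_le_right _ _
      linarith [hxy]
    have := hgδ hd
    rw [Real.dist_eq] at this
    exact this.le
  -- conclusion
  have hI : (⨅ z : H, (g z - f z)) ≤ g p.fst - f p.fst := ciInf_le hbddI p.fst
  have hF1 := abs_le.mp hFdiff
  have hg1 := abs_le.mp hgdiff
  have h600 : 200 * ε₀ ≤ ε/3 := by linarith [hε₀ε]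
  linarith [hstar, hineq1, hineq2, hI, hF1.1, hF1.2, hg1.1, hg1.2, h600,
    mul_nonneg hα.le (sq_nonneg ‖p.fst - p.snd‖)]
end
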